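/- arXiv:2211.14848 — 7 statements merged into one kernel-verified Lean document; each statement's English description precedes it below -/
import Mathlib

section
/- Assume u ≠ 0 and v ≠ 0. Then (x,y) ∈ ℝ^m × ℝ^n is a saddle point of f (a critical point that is not a local minimum) if and only if at least one of the following holds: (a) |Σ_{i : u_i ≠ 0} sgn(u_i) x_i| = Σ_{i : u_i = 0} |x_i| and y = 0; or (b) x = 0 and |Σ_{j : v_j ≠ 0} sgn(v_j) y_j| = Σ_{j : v_j = 0} |y_j|; or (c) Σ_{i : u_i ≠ 0} sgn(u_i) x_i = 0, Σ_{j : v_j ≠ 0} sgn(v_j) y_j = 0, x_i y_j / (u_i v_j) ≤ 1 whenever u_i v_j ≠ 0, x_i = 0 whenever u_i = 0, and y_j = 0 whenever v_j = 0. -/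
/-!
Flipping the signs of `xᵢ` and `uᵢ` together (or of `yⱼ` and `vⱼ`) preserves the loss, the
Clarke condition and the conditions (a)-(c), so we may assume `u, v ≥ 0`; exchanging `(u, x)`
with `(v, y)` reduces the case `x = 0` to the case `y = 0`.

At `(x, 0)`, a column `j` with `vⱼ > 0` of a critical `Λ` forces `|S| ≤ Z`, where
`S = Σ_{uᵢ ≠ 0} xᵢ` and `Z = Σ_{uᵢ = 0} |xᵢ|`. Since `f ≥ Σu Σv + (Z - |S|) Σ|yⱼ|` near `(x, 0)`,
strict inequality gives a local minimum, while for `|S| = Z` the loss decreases at second order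
along `(x + εσu, εσv)`.

If `x, y ≠ 0`, criticality forces them to vanish off the supports of `u` and `v`, on which
`u, v > 0`. If `x` has entries of both signs, the rows of `Λ` give `Σ y = 0` and `x yᵀ ≤ u vᵀ`, and
by symmetry `Σ x = 0`: this is (c), where shrinking the negative entries of `x` and `y` lowers the
loss `Σu Σv - Σx Σy`. If all entries of `x` have one sign, then `x yᵀ = u vᵀ`, a global minimum.
-/

open scoped Classical

/-- The set-valued sign function: `{-1}` for negative, `[-1,1]` at zero, `{1}` for positive. -/
noncomputable def signSet (t : ℝ) : Set ℝ :=
  if t < 0 then {-1} else if 0 < t then {1} else Set.Icc (-1) 1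

open Finset Filter Topology

section SignSet

variable {s s' t c : ℝ}

theorem mem_signSet_iff : s ∈ signSet t ↔ |s| ≤ 1 ∧ s * t = |t| := by
  unfold signSet
  rcases lt_trichotomy t 0 with ht | rfl | ht
  · simp only [ht, if_true, Set.mem_singleton_iff, abs_of_neg ht]
    constructor
    · rintro rfl; norm_num
    · rintro ⟨-, h⟩; nlinarith
  · simp [abs_le]
  · simp only [ht.not_gt, ht, if_true, if_false, Set.mem_singleton_iff, abs_of_pos ht]
    constructor
    · rintro rfl; norm_num
    · rintro ⟨-, h⟩; nlinarith

theorem neg_one_le_of_mem_signSet (h : s ∈ signSet t) : -1 ≤ s :=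
  (abs_le.1 (mem_signSet_iff.1 h).1).1

theorem le_one_of_mem_signSet (h : s ∈ signSet t) : s ≤ 1 :=
  (abs_le.1 (mem_signSet_iff.1 h).1).2

theorem eq_neg_one_of_mem_signSet_of_neg (h : s ∈ signSet t) (ht : t < 0) : s = -1 := by
  have := (mem_signSet_iff.1 h).2
  rw [abs_of_neg ht] at this
  nlinarith

theorem eq_one_of_mem_signSet_of_pos (h : s ∈ signSet t) (ht : 0 < t) : s = 1 := by
  have := (mem_signSet_iff.1 h).2
  rw [abs_of_pos ht] at this
  nlinarith

theorem neg_one_mem_signSet_iff : -1 ∈ signSet t ↔ t ≤ 0 := by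
  simp [mem_signSet_iff, eq_comm (a := -t), abs_eq_neg_self]

theorem mem_signSet_zero_iff : s ∈ signSet 0 ↔ |s| ≤ 1 := by
  simp [mem_signSet_iff]

theorem eq_zero_of_zero_mem_signSet (h : 0 ∈ signSet t) : t = 0 := by
  simpa [mem_signSet_iff, eq_comm] using h

theorem eq_of_mem_signSet (h : s ∈ signSet t) (h' : s' ∈ signSet t) (ht : t ≠ 0) : s = s' :=
  mul_right_cancel₀ ht ((mem_signSet_iff.1 h).2.trans (mem_signSet_iff.1 h').2.symm)

theorem signSet_mul_of_pos (hc : 0 < c) : signSet (c * t) = signSet t := by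
  ext s
  simp only [mem_signSet_iff, abs_mul, abs_of_pos hc, mul_left_comm s c]
  exact and_congr_right fun _ => mul_right_inj' hc.ne'

theorem mul_mem_signSet_mul (hc : |c| = 1) (h : s ∈ signSet t) :
    c * s ∈ signSet (c * t) := by
  rcases (abs_eq zero_le_one).1 hc with rfl | rfl
  · simpa using h
  · simpa [mem_signSet_iff, abs_neg] using h

theorem abs_sign_le_one (t : ℝ) : |(SignType.sign t : ℝ)| ≤ 1 := by
  cases SignType.sign t <;> simp

end SignSet

theorem isLocalMin_comp_homeomorph_iff {X Y β : Type*} [TopologicalSpace X] [TopologicalSpace Y]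
    [Preorder β] (e : X ≃ₜ Y) {f : Y → β} {p : X} :
    IsLocalMin (f ∘ e) p ↔ IsLocalMin f (e p) := by
  simp only [IsLocalMin, IsMinFilter, ← e.map_nhds_eq, eventually_map, Function.comp_apply]

theorem not_isLocalMin_of_tendsto {X : Type*} [TopologicalSpace X] {f : X → ℝ} {p : X}
    {l : Filter ℝ} [l.NeBot] {γ : ℝ → X} (hγ : Tendsto γ l (𝓝 p))
    (hlt : ∀ᶠ t in l, f (γ t) < f p) : ¬ IsLocalMin f p := fun hmin =>
  let ⟨_, hle, hlt⟩ := ((hγ.eventually hmin).and hlt).exists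
  hle.not_gt hlt

theorem isLocalMin_comp_iff_of_involutive {X β : Type*} [TopologicalSpace X] [Preorder β]
    {g : X → X} (hg : Continuous g) (hinv : Function.Involutive g) {f : X → β} {p : X} :
    IsLocalMin (f ∘ g) p ↔ IsLocalMin f (g p) :=
  isLocalMin_comp_homeomorph_iff
    { hinv.toPerm g with continuous_toFun := hg, continuous_invFun := hg }

section Definitions

variable {ι κ : Type*} [Fintype ι] [Fintype κ]

noncomputable def rankOneLoss (u : ι → ℝ) (v : κ → ℝ) (z : (ι → ℝ) × (κ → ℝ)) : ℝ :=
  ∑ i, ∑ j, |z.1 i * z.2 j - u i * v j|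

def IsCritical (u : ι → ℝ) (v : κ → ℝ) (x : ι → ℝ) (y : κ → ℝ) : Prop :=
  ∃ Λ : Matrix ι κ ℝ, (∀ i j, Λ i j ∈ signSet (x i * y j - u i * v j)) ∧
    (∀ i, ∑ j, Λ i j * y j = 0) ∧ (∀ j, ∑ i, Λ i j * x i = 0)

def IsSaddle (u : ι → ℝ) (v : κ → ℝ) (x : ι → ℝ) (y : κ → ℝ) : Prop :=
  IsCritical u v x y ∧ ¬ IsLocalMin (rankOneLoss u v) (x, y)

noncomputable def signedSum (u x : ι → ℝ) : ℝ :=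
  ∑ i ∈ univ.filter (fun i => u i ≠ 0), Real.sign (u i) * x i

noncomputable def offSupportNorm (u x : ι → ℝ) : ℝ :=
  ∑ i ∈ univ.filter (fun i => u i = 0), |x i|

def BalancedBelow (u : ι → ℝ) (v : κ → ℝ) (x : ι → ℝ) (y : κ → ℝ) : Prop :=
  signedSum u x = 0 ∧ signedSum v y = 0 ∧
    (∀ i j, u i * v j ≠ 0 → x i * y j / (u i * v j) ≤ 1) ∧
    (∀ i, u i = 0 → x i = 0) ∧ (∀ j, v j = 0 → y j = 0)

def SaddleCondition (u : ι → ℝ) (v : κ → ℝ) (x : ι → ℝ) (y : κ → ℝ) : Prop :=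
  (|signedSum u x| = offSupportNorm u x ∧ y = 0) ∨
    (x = 0 ∧ |signedSum v y| = offSupportNorm v y) ∨ BalancedBelow u v x y

end Definitions

variable {ι κ : Type*} {u x : ι → ℝ} {v y : κ → ℝ}

section Swap

variable [Fintype ι] [Fintype κ]

theorem rankOneLoss_swap (u : ι → ℝ) (v : κ → ℝ) (z : (ι → ℝ) × (κ → ℝ)) :
    rankOneLoss v u z.swap = rankOneLoss u v z := by
  simp only [rankOneLoss, Prod.fst_swap, Prod.snd_swap, mul_comm (z.2 _), mul_comm (v _)]
  exact sum_comm

theorem IsCritical.swap (h : IsCritical u v x y) : IsCritical v u y x := by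
  obtain ⟨Λ, hΛ, hrow, hcol⟩ := h
  exact ⟨Λ.transpose, fun j i => by simpa [mul_comm] using hΛ i j, hcol, hrow⟩

theorem isCritical_swap : IsCritical v u y x ↔ IsCritical u v x y :=
  ⟨IsCritical.swap, IsCritical.swap⟩

theorem isLocalMin_rankOneLoss_swap :
    IsLocalMin (rankOneLoss v u) (y, x) ↔ IsLocalMin (rankOneLoss u v) (x, y) := by
  have h := isLocalMin_comp_homeomorph_iff (Homeomorph.prodComm (ι → ℝ) (κ → ℝ))
    (f := rankOneLoss v u) (p := (x, y))
  have e : rankOneLoss v u ∘ Homeomorph.prodComm _ _ = rankOneLoss u v :=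
    funext (rankOneLoss_swap u v)
  rw [e] at h
  exact h.symm

theorem isSaddle_swap : IsSaddle v u y x ↔ IsSaddle u v x y :=
  and_congr isCritical_swap (not_congr isLocalMin_rankOneLoss_swap)

theorem saddleCondition_swap : SaddleCondition v u y x ↔ SaddleCondition u v x y := by
  simp only [SaddleCondition, BalancedBelow, mul_comm (v _), mul_comm (y _)]
  constructor <;> rintro (h | h | ⟨h₁, h₂, h₃, h₄, h₅⟩)
  all_goals first
    | exact Or.inr (Or.inl h.symm)
    | exact Or.inl h.symm
    | exact Or.inr (Or.inr ⟨h₂, h₁, fun i j => h₃ j i, h₅, h₄⟩)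

end Swap

section Flip

variable [Fintype ι] [Fintype κ] {ε : ι → ℝ} {δ : κ → ℝ}

theorem mul_self_eq_one_of_abs_eq_one {c : ℝ} (hc : |c| = 1) : c * c = 1 := by
  rw [← abs_mul_abs_self, hc, one_mul]

theorem mul_mul_cancel_of_abs_eq_one {α : Type*} {ε : α → ℝ} (hε : ∀ i, |ε i| = 1)
    (x : α → ℝ) : ε * (ε * x) = x := by
  ext i
  simp [← mul_assoc, mul_self_eq_one_of_abs_eq_one (hε i)]

theorem mul_eq_zero_iff_of_abs_eq_one {α : Type*} {ε : α → ℝ} (hε : ∀ i, |ε i| = 1)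
    {x : α → ℝ} : ε * x = 0 ↔ x = 0 := by
  refine ⟨fun h => ?_, fun h => by simp [h]⟩
  rw [← mul_mul_cancel_of_abs_eq_one hε x, h, mul_zero]

theorem exists_abs_eq_one_mul_nonneg {α : Type*} (u : α → ℝ) :
    ∃ ε : α → ℝ, (∀ i, |ε i| = 1) ∧ ∀ i, 0 ≤ (ε * u) i :=
  ⟨fun i => if u i < 0 then -1 else 1, fun i => by dsimp only; split_ifs <;> simp, fun i => by
    simp only [Pi.mul_apply]
    split_ifs with h <;> linarith⟩

theorem rankOneLoss_flip (hε : ∀ i, |ε i| = 1) (hδ : ∀ j, |δ j| = 1)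
    (z : (ι → ℝ) × (κ → ℝ)) :
    rankOneLoss (ε * u) (δ * v) (ε * z.1, δ * z.2) = rankOneLoss u v z := by
  refine sum_congr rfl fun i _ => sum_congr rfl fun j _ => ?_
  simp only [Pi.mul_apply]
  rw [show ε i * z.1 i * (δ j * z.2 j) - ε i * u i * (δ j * v j)
      = ε i * δ j * (z.1 i * z.2 j - u i * v j) by ring, abs_mul, abs_mul, hε, hδ,
    one_mul, one_mul]

theorem IsCritical.flip (hε : ∀ i, |ε i| = 1) (hδ : ∀ j, |δ j| = 1)
    (h : IsCritical u v x y) : IsCritical (ε * u) (δ * v) (ε * x) (δ * y) := by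
  obtain ⟨Λ, hΛ, hrow, hcol⟩ := h
  refine ⟨fun i j => ε i * δ j * Λ i j, fun i j => ?_, fun i => ?_, fun j => ?_⟩
  · have := mul_mem_signSet_mul (c := ε i * δ j) (by rw [abs_mul, hε, hδ, one_mul]) (hΛ i j)
    convert this using 2
    simp only [Pi.mul_apply]
    ring
  · simp only [Pi.mul_apply]
    simp_rw [show ∀ j, ε i * δ j * Λ i j * (δ j * y j) = ε i * (δ j * δ j) * (Λ i j * y j)
      from fun j => by ring, fun j => mul_self_eq_one_of_abs_eq_one (hδ j), mul_one, ← mul_sum,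
      hrow, mul_zero]
  · simp only [Pi.mul_apply]
    simp_rw [show ∀ i, ε i * δ j * Λ i j * (ε i * x i) = δ j * (ε i * ε i) * (Λ i j * x i)
      from fun i => by ring, fun i => mul_self_eq_one_of_abs_eq_one (hε i), mul_one, ← mul_sum,
      hcol, mul_zero]

theorem isCritical_flip (hε : ∀ i, |ε i| = 1) (hδ : ∀ j, |δ j| = 1) :
    IsCritical (ε * u) (δ * v) (ε * x) (δ * y) ↔ IsCritical u v x y := by
  refine ⟨fun h => ?_, IsCritical.flip hε hδ⟩
  simpa only [mul_mul_cancel_of_abs_eq_one hε, mul_mul_cancel_of_abs_eq_one hδ] using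
    h.flip hε hδ

theorem isLocalMin_rankOneLoss_flip (hε : ∀ i, |ε i| = 1) (hδ : ∀ j, |δ j| = 1) :
    IsLocalMin (rankOneLoss (ε * u) (δ * v)) (ε * x, δ * y) ↔
      IsLocalMin (rankOneLoss u v) (x, y) := by
  have h := isLocalMin_comp_iff_of_involutive (f := rankOneLoss (ε * u) (δ * v)) (p := (x, y))
    (g := fun z => (ε * z.1, δ * z.2)) (by fun_prop) fun z => by
      simp [mul_mul_cancel_of_abs_eq_one hε, mul_mul_cancel_of_abs_eq_one hδ]
  rw [show rankOneLoss (ε * u) (δ * v) ∘ _ = rankOneLoss u v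
    from funext (rankOneLoss_flip hε hδ)] at h
  exact h.symm

theorem isSaddle_flip (hε : ∀ i, |ε i| = 1) (hδ : ∀ j, |δ j| = 1) :
    IsSaddle (ε * u) (δ * v) (ε * x) (δ * y) ↔ IsSaddle u v x y :=
  and_congr (isCritical_flip hε hδ) (not_congr (isLocalMin_rankOneLoss_flip hε hδ))

theorem signedSum_flip (hε : ∀ i, |ε i| = 1) : signedSum (ε * u) (ε * x) = signedSum u x := by
  have hε0 : ∀ i, ε i ≠ 0 := fun i h => by simpa [h] using hε i
  simp only [signedSum, Pi.mul_apply, ne_eq, mul_eq_zero, hε0, false_or]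
  refine sum_congr rfl fun i _ => ?_
  rcases (abs_eq zero_le_one).1 (hε i) with h | h <;> simp [h, Real.sign_neg]

theorem offSupportNorm_flip (hε : ∀ i, |ε i| = 1) :
    offSupportNorm (ε * u) (ε * x) = offSupportNorm u x := by
  have hε0 : ∀ i, ε i ≠ 0 := fun i h => by simpa [h] using hε i
  simp [offSupportNorm, hε0, abs_mul, hε]

theorem saddleCondition_flip (hε : ∀ i, |ε i| = 1) (hδ : ∀ j, |δ j| = 1) :
    SaddleCondition (ε * u) (δ * v) (ε * x) (δ * y) ↔ SaddleCondition u v x y := by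
  have hε0 : ∀ i, ε i ≠ 0 := fun i h => by simpa [h] using hε i
  have hδ0 : ∀ j, δ j ≠ 0 := fun j h => by simpa [h] using hδ j
  have hdiv : ∀ i j, ε i * x i * (δ j * y j) / (ε i * u i * (δ j * v j))
      = x i * y j / (u i * v j) := fun i j => by
    rw [show ε i * x i * (δ j * y j) / (ε i * u i * (δ j * v j))
        = ε i * δ j * (x i * y j) / (ε i * δ j * (u i * v j)) by ring,
      mul_div_mul_left _ _ (mul_ne_zero (hε0 i) (hδ0 j))]
  simp only [SaddleCondition, BalancedBelow, signedSum_flip hε, signedSum_flip hδ,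
    offSupportNorm_flip hε, offSupportNorm_flip hδ, mul_eq_zero_iff_of_abs_eq_one hε,
    mul_eq_zero_iff_of_abs_eq_one hδ, Pi.mul_apply, hdiv, mul_eq_zero, hε0, hδ0, false_or, ne_eq]

end Flip

section General

variable [Fintype ι] [Fintype κ]

theorem isLocalMin_of_forall_mul_eq (h : ∀ i j, x i * y j = u i * v j) :
    IsLocalMin (rankOneLoss u v) (x, y) :=
  Eventually.of_forall fun _ => by
    simp only [rankOneLoss, h, sub_self, abs_zero, sum_const_zero]
    exact sum_nonneg fun i _ => sum_nonneg fun j _ => abs_nonneg _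

theorem rankOneLoss_eq_of_forall_mul_le (h : ∀ i j, x i * y j ≤ u i * v j) :
    rankOneLoss u v (x, y) = (∑ i, u i) * (∑ j, v j) - (∑ i, x i) * ∑ j, y j := by
  simp only [rankOneLoss, sum_mul_sum, ← sum_sub_distrib]
  exact sum_congr rfl fun i _ => sum_congr rfl fun j _ => by
    rw [abs_of_nonpos (sub_nonpos.2 (h i j)), neg_sub]

theorem rankOneLoss_smul_right (a : ι → ℝ) (t : ℝ) :
    rankOneLoss u v (a, t • v) = (∑ i, |a i * t - u i|) * ∑ j, |v j| := by
  simp only [rankOneLoss, sum_mul_sum, Pi.smul_apply, smul_eq_mul, ← abs_mul]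
  exact sum_congr rfl fun i _ => sum_congr rfl fun j _ => congrArg abs (by ring)

theorem isCritical_of_forall_mul_le (h : ∀ i j, x i * y j ≤ u i * v j) (hx : ∑ i, x i = 0)
    (hy : ∑ j, y j = 0) : IsCritical u v x y :=
  ⟨fun _ _ => -1, fun i j => neg_one_mem_signSet_iff.2 (sub_nonpos.2 (h i j)),
    fun i => by simp [sum_neg_distrib, hy], fun j => by simp [sum_neg_distrib, hx]⟩

theorem IsCritical.neg (h : IsCritical u v x y) : IsCritical u v (-x) (-y) := by
  obtain ⟨Λ, hΛ, hrow, hcol⟩ := h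
  exact ⟨Λ, by simpa using hΛ, by simpa using hrow, by simpa using hcol⟩

theorem IsCritical.eq_zero_of_eq_zero (h : IsCritical u v x y) (hy : y ≠ 0) {i : ι}
    (hu : u i = 0) : x i = 0 := by
  obtain ⟨Λ, hΛ, hrow, -⟩ := h
  have hsum : ∑ j, |x i * y j| = 0 := by
    rw [← mul_zero (x i), ← hrow i, mul_sum]
    refine sum_congr rfl fun j _ => ?_
    have := (mem_signSet_iff.1 (hΛ i j)).2
    rw [hu, zero_mul, sub_zero] at this
    rw [← this]
    ring
  obtain ⟨j, hj⟩ := Function.ne_iff.1 hy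
  have := (sum_eq_zero_iff_of_nonneg fun j _ => abs_nonneg _).1 hsum j (mem_univ j)
  exact (mul_eq_zero.1 (abs_eq_zero.1 this)).resolve_right hj

theorem offSupportNorm_eq_zero (hx : ∀ i, u i = 0 → x i = 0) : offSupportNorm u x = 0 :=
  sum_eq_zero fun i hi => by rw [hx i (mem_filter.1 hi).2, abs_zero]

theorem saddleCondition_prod_zero_iff :
    SaddleCondition u v x 0 ↔ |signedSum u x| = offSupportNorm u x := by
  refine ⟨?_, fun h => Or.inl ⟨h, rfl⟩⟩
  rintro (⟨h, -⟩ | ⟨rfl, -⟩ | ⟨hx, -, -, hx0, -⟩)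
  · exact h
  · simp [signedSum, offSupportNorm]
  · rw [hx, offSupportNorm_eq_zero hx0, abs_zero]

theorem saddleCondition_iff_balancedBelow (hx : x ≠ 0) (hy : y ≠ 0) :
    SaddleCondition u v x y ↔ BalancedBelow u v x y := by
  simp [SaddleCondition, hx, hy]

end General

section Positive

variable [Fintype ι] [Fintype κ]

theorem neg_le_mul_of_mem_signSet {μ a b r : ℝ} (h : μ ∈ signSet (a * b - r)) (hr : 0 < r)
    (ha : 0 < a) : -b ≤ μ * b := by
  rcases le_or_gt 0 b with hb | hb
  · nlinarith [neg_one_le_of_mem_signSet h]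
  · rw [eq_neg_one_of_mem_signSet_of_neg h (by nlinarith)]
    simp

theorem IsCritical.sum_nonneg_of_pos (hu : ∀ i, 0 < u i) (hv : ∀ j, 0 < v j)
    (h : IsCritical u v x y) {i : ι} (hi : 0 < x i) : 0 ≤ ∑ j, y j := by
  obtain ⟨Λ, hΛ, hrow, -⟩ := h
  have := sum_le_sum fun j (_ : j ∈ univ) =>
    neg_le_mul_of_mem_signSet (hΛ i j) (mul_pos (hu i) (hv j)) hi
  rw [sum_neg_distrib, hrow i] at this
  linarith

theorem IsCritical.sum_eq_zero_of_pos_of_neg (hu : ∀ i, 0 < u i) (hv : ∀ j, 0 < v j)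
    (h : IsCritical u v x y) {i k : ι} (hi : 0 < x i) (hk : x k < 0) : ∑ j, y j = 0 := by
  have := h.neg.sum_nonneg_of_pos hu hv (i := k) (by simpa using hk)
  simp only [Pi.neg_apply, sum_neg_distrib, neg_nonneg] at this
  exact le_antisymm this (h.sum_nonneg_of_pos hu hv hi)

theorem IsCritical.mul_le_of_sum_eq_zero (hu : ∀ i, 0 < u i) (hv : ∀ j, 0 < v j)
    (h : IsCritical u v x y) (hy : ∑ j, y j = 0) (i : ι) (j : κ) :
    x i * y j ≤ u i * v j := by
  wlog hi : 0 < x i generalizing x y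
  · rcases (not_lt.1 hi).lt_or_eq with hi | hi
    · simpa using this h.neg (by simp [hy]) (by simpa using hi)
    · rw [hi, zero_mul]
      exact (mul_pos (hu i) (hv j)).le
  obtain ⟨Λ, hΛ, hrow, -⟩ := h
  have hle := fun j (_ : j ∈ univ) =>
    neg_le_mul_of_mem_signSet (hΛ i j) (mul_pos (hu i) (hv j)) hi
  have heq := (sum_eq_sum_iff_of_le hle).1 (by rw [sum_neg_distrib, hy, hrow i, neg_zero]) j
    (mem_univ j)
  rcases eq_or_ne (y j) 0 with hyj | hyj
  · rw [hyj, mul_zero]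
    exact (mul_pos (hu i) (hv j)).le
  · have hΛ1 : Λ i j = -1 := mul_right_cancel₀ hyj (by linarith)
    exact sub_nonpos.1 (neg_one_mem_signSet_iff.1 (hΛ1 ▸ hΛ i j))

theorem IsCritical.balanced_of_pos_of_neg (hu : ∀ i, 0 < u i) (hv : ∀ j, 0 < v j)
    (h : IsCritical u v x y) (hy : y ≠ 0) {i k : ι} (hi : 0 < x i) (hk : x k < 0) :
    ∑ i, x i = 0 ∧ ∑ j, y j = 0 ∧ ∀ i j, x i * y j ≤ u i * v j := by
  have hy0 := h.sum_eq_zero_of_pos_of_neg hu hv hi hk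
  obtain ⟨j₀, hj₀⟩ := Function.ne_iff.1 hy
  obtain ⟨j, -, hj⟩ := exists_pos_of_sum_zero_of_exists_nonzero y hy0 ⟨j₀, mem_univ _, hj₀⟩
  obtain ⟨l, -, hl⟩ := exists_pos_of_sum_zero_of_exists_nonzero (-y)
    (by simp [hy0]) ⟨j₀, mem_univ _, by simpa using hj₀⟩
  exact ⟨h.swap.sum_eq_zero_of_pos_of_neg hv hu hj (by simpa using hl), hy0,
    h.mul_le_of_sum_eq_zero hu hv hy0⟩

theorem IsCritical.pos_of_nonneg (hu : ∀ i, 0 < u i) (hv : ∀ j, 0 < v j)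
    (h : IsCritical u v x y) (hx : ∀ i, 0 ≤ x i) (hx0 : x ≠ 0) (j : κ) : 0 < y j := by
  by_contra! hyj
  obtain ⟨Λ, hΛ, -, hcol⟩ := h
  have hΛ1 : ∀ i, Λ i j = -1 := fun i => eq_neg_one_of_mem_signSet_of_neg (hΛ i j)
    (by nlinarith [hx i, mul_pos (hu i) (hv j)])
  obtain ⟨i, hi⟩ := Function.ne_iff.1 hx0
  have hpos : 0 < ∑ i, x i :=
    sum_pos' (fun i _ => hx i) ⟨i, mem_univ _, (hx i).lt_of_ne (Ne.symm hi)⟩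
  have := hcol j
  simp only [hΛ1, neg_one_mul, sum_neg_distrib] at this
  linarith

theorem eq_of_mem_signSet_of_sum_eq {μ μ' : κ → ℝ} {a a' p p' : ℝ} (hp : 0 < p)
    (hp' : 0 < p') (hμ : ∀ j, μ j ∈ signSet (a * y j - p * v j))
    (hμ' : ∀ j, μ' j ∈ signSet (a' * y j - p' * v j)) (hy : ∀ j, 0 < y j)
    (hsum : ∑ j, μ j * y j = ∑ j, μ' j * y j) (hlt : a * p' < a' * p) : μ = μ' := by
  -- The larger ratio `a' / p'` makes every residual of the second row larger.
  have hle : ∀ j ∈ univ, μ j * y j ≤ μ' j * y j := fun j _ => by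
    refine mul_le_mul_of_nonneg_right ?_ (hy j).le
    rcases lt_or_ge (a * y j - p * v j) 0 with hneg | hnn
    · rw [eq_neg_one_of_mem_signSet_of_neg (hμ j) hneg]
      exact neg_one_le_of_mem_signSet (hμ' j)
    · rw [eq_one_of_mem_signSet_of_pos (hμ' j)
        (by nlinarith [mul_lt_mul_of_pos_right hlt (hy j), mul_nonneg hp'.le hnn])]
      exact le_one_of_mem_signSet (hμ j)
  funext j
  exact mul_right_cancel₀ (hy j).ne' ((sum_eq_sum_iff_of_le hle).1 hsum j (mem_univ j))

theorem IsCritical.mul_eq_of_nonneg (hu : ∀ i, 0 < u i) (hv : ∀ j, 0 < v j)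
    (h : IsCritical u v x y) (hx : ∀ i, 0 ≤ x i) (hx0 : x ≠ 0) (i : ι) (j : κ) :
    x i * y j = u i * v j := by
  have hy := h.pos_of_nonneg hu hv hx hx0
  have hxpos := h.swap.pos_of_nonneg hv hu (fun j => (hy j).le)
    (Function.ne_iff.2 ⟨j, (hy j).ne'⟩)
  obtain ⟨Λ, hΛ, hrow, hcol⟩ := h
  by_contra hne
  have hR : x i * y j - u i * v j ≠ 0 := sub_ne_zero.2 hne
  -- Rows with different ratios `xₖ / uₖ` coincide and rows with equal ratios have residuals of
  -- the same sign, so column `j` of `Λ` is constant; the column equation makes it vanish.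
  have hrowEq : ∀ k l, x k * u l < x l * u k → Λ k = Λ l := fun k l =>
    eq_of_mem_signSet_of_sum_eq (hu k) (hu l) (hΛ k) (hΛ l) hy (by rw [hrow k, hrow l])
  have hcolumn : ∀ k, Λ k j = Λ i j := fun k => by
    rcases lt_trichotomy (x k * u i) (x i * u k) with hlt | heq | hgt
    · rw [hrowEq k i hlt]
    · have hset : signSet (x k * y j - u k * v j) = signSet (x i * y j - u i * v j) := by
        rw [← signSet_mul_of_pos (hu i) (t := x k * y j - u k * v j),
          ← signSet_mul_of_pos (hu k) (t := x i * y j - u i * v j)]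
        congr 1
        linear_combination y j * heq
      exact eq_of_mem_signSet (hset ▸ hΛ k j) (hΛ i j) hR
    · rw [hrowEq i k hgt]
  have hΛ0 : Λ i j = 0 := by
    have := hcol j
    simp only [hcolumn, ← mul_sum] at this
    exact (mul_eq_zero.1 this).resolve_right (sum_pos (fun i _ => hxpos i) ⟨i, mem_univ i⟩).ne'
  exact hR (eq_zero_of_zero_mem_signSet (hΛ0 ▸ hΛ i j))

theorem IsCritical.mul_eq_or_balanced (hu : ∀ i, 0 < u i) (hv : ∀ j, 0 < v j)
    (h : IsCritical u v x y) (hx : x ≠ 0) (hy : y ≠ 0) :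
    (∀ i j, x i * y j = u i * v j) ∨
      (∑ i, x i = 0 ∧ ∑ j, y j = 0 ∧ ∀ i j, x i * y j ≤ u i * v j) := by
  by_cases hpos : ∃ i, 0 < x i
  · by_cases hneg : ∃ k, x k < 0
    · obtain ⟨i, hi⟩ := hpos
      obtain ⟨k, hk⟩ := hneg
      exact Or.inr (h.balanced_of_pos_of_neg hu hv hy hi hk)
    · simp only [not_exists, not_lt] at hneg
      exact Or.inl (h.mul_eq_of_nonneg hu hv hneg hx)
  · simp only [not_exists, not_lt] at hpos
    refine Or.inl fun i j => ?_
    simpa using h.neg.mul_eq_of_nonneg hu hv (fun i => by simpa using hpos i)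
      (neg_ne_zero.2 hx) i j

end Positive

section Restrict

theorem forall_mul_of_forall_subtype {r : ℝ → ℝ → Prop} (hr : r 0 0) (hx : ∀ i, u i = 0 → x i = 0)
    (hy : ∀ j, v j = 0 → y j = 0)
    (h : ∀ (i : {i // u i ≠ 0}) (j : {j // v j ≠ 0}), r (x i * y j) (u i * v j)) (i : ι)
    (j : κ) : r (x i * y j) (u i * v j) := by
  by_cases hi : u i = 0
  · simpa [hi, hx i hi] using hr
  by_cases hj : v j = 0
  · simpa [hj, hy j hj] using hr
  exact h ⟨i, hi⟩ ⟨j, hj⟩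

variable [Fintype ι] [Fintype κ]

theorem sum_subtype_eq_sum_of_eq_zero {p : ι → Prop} [DecidablePred p] {f : ι → ℝ}
    (hf : ∀ i, ¬ p i → f i = 0) : ∑ i : Subtype p, f i = ∑ i, f i := by
  rw [← Fintype.sum_subtype_add_sum_subtype p f, Fintype.sum_eq_zero (fun i : {i // ¬ p i} => f i)
    fun i => hf i i.2, add_zero]

theorem IsCritical.restrict (h : IsCritical u v x y) (hx : ∀ i, u i = 0 → x i = 0)
    (hy : ∀ j, v j = 0 → y j = 0) :
    IsCritical (fun i : {i // u i ≠ 0} => u i) (fun j : {j // v j ≠ 0} => v j)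
      (fun i => x i) (fun j => y j) := by
  obtain ⟨Λ, hΛ, hrow, hcol⟩ := h
  refine ⟨fun i j => Λ i j, fun i j => hΛ i j, fun i => ?_, fun j => ?_⟩
  · rw [sum_subtype_eq_sum_of_eq_zero (f := fun j => Λ i j * y j)
      fun j hj => by rw [hy j (not_not.1 hj), mul_zero]]
    exact hrow i
  · rw [sum_subtype_eq_sum_of_eq_zero (f := fun i => Λ i j * x i)
      fun i hi => by rw [hx i (not_not.1 hi), mul_zero]]
    exact hcol j

end Restrict

section Nonneg

variable [Fintype ι] [Fintype κ]

theorem signedSum_of_nonneg (hu : ∀ i, 0 ≤ u i) (x : ι → ℝ) :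
    signedSum u x = ∑ i ∈ univ.filter (fun i => u i ≠ 0), x i :=
  sum_congr rfl fun i hi => by
    rw [Real.sign_of_pos ((hu i).lt_of_ne' (mem_filter.1 hi).2), one_mul]

theorem sum_eq_signedSum_of_nonneg (hu : ∀ i, 0 ≤ u i) (hx : ∀ i, u i = 0 → x i = 0) :
    ∑ i, x i = signedSum u x := by
  rw [signedSum_of_nonneg hu,
    sum_filter_of_ne (p := fun i => u i ≠ 0) fun i _ hxi hui => hxi (hx i hui)]

theorem rankOneLoss_prod_zero_of_nonneg (hu : ∀ i, 0 ≤ u i) (hv : ∀ j, 0 ≤ v j) :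
    rankOneLoss u v (x, 0) = (∑ i, u i) * ∑ j, v j := by
  rw [rankOneLoss_eq_of_forall_mul_le fun i j => by simpa using mul_nonneg (hu i) (hv j)]
  simp

theorem le_sum_abs_mul_sub (hu : ∀ i, 0 ≤ u i) (a : ι → ℝ) (t c : ℝ) :
    c * ∑ i, u i + (offSupportNorm u a - |signedSum u a|) * |t| ≤ ∑ i, |a i * t - u i * c| := by
  rw [← sum_filter_add_sum_filter_not univ (fun i => u i = 0) (fun i => |a i * t - u i * c|)]
  have hzero : ∑ i ∈ univ.filter (fun i => u i = 0), |a i * t - u i * c|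
      = offSupportNorm u a * |t| := by
    rw [offSupportNorm, sum_mul]
    exact sum_congr rfl fun i hi => by rw [(mem_filter.1 hi).2, zero_mul, sub_zero, abs_mul]
  have hsupp : c * ∑ i, u i - signedSum u a * t
      ≤ ∑ i ∈ univ.filter (fun i => ¬ u i = 0), |a i * t - u i * c| := by
    rw [signedSum_of_nonneg hu, ← sum_filter_ne_zero univ, mul_sum, sum_mul, ← sum_sub_distrib]
    exact sum_le_sum fun i _ => by rw [abs_sub_comm, mul_comm c]; exact le_abs_self _
  nlinarith [le_abs_self (signedSum u a * t), abs_mul (signedSum u a) t]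

theorem isLocalMin_of_abs_signedSum_lt (hu : ∀ i, 0 ≤ u i) (hv : ∀ j, 0 ≤ v j)
    (h : |signedSum u x| < offSupportNorm u x) : IsLocalMin (rankOneLoss u v) (x, 0) := by
  have hcont : Continuous fun z : (ι → ℝ) × (κ → ℝ) =>
      offSupportNorm u z.1 - |signedSum u z.1| := by
    unfold offSupportNorm signedSum
    fun_prop
  filter_upwards [(hcont.tendsto (x, 0)).eventually (lt_mem_nhds (sub_pos.2 h))] with z hz
  calc rankOneLoss u v (x, 0) = ∑ j, v j * ∑ i, u i := by
        rw [rankOneLoss_prod_zero_of_nonneg hu hv, mul_comm, sum_mul]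
    _ ≤ ∑ j, (v j * ∑ i, u i + (offSupportNorm u z.1 - |signedSum u z.1|) * |z.2 j|) :=
        sum_le_sum fun j _ => le_add_of_nonneg_right (mul_nonneg hz.le (abs_nonneg _))
    _ ≤ ∑ j, ∑ i, |z.1 i * z.2 j - u i * v j| :=
        sum_le_sum fun j _ => le_sum_abs_mul_sub hu z.1 (z.2 j) (v j)
    _ = rankOneLoss u v z := sum_comm

theorem abs_signedSum_le_of_isCritical (hu : ∀ i, 0 ≤ u i) (hv : ∀ j, 0 ≤ v j) (hv' : v ≠ 0)
    (h : IsCritical u v x 0) : |signedSum u x| ≤ offSupportNorm u x := by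
  obtain ⟨Λ, hΛ, -, hcol⟩ := h
  obtain ⟨j, hj⟩ := Function.ne_iff.1 hv'
  have hΛ1 : ∀ i, u i ≠ 0 → Λ i j = -1 := fun i hi =>
    eq_neg_one_of_mem_signSet_of_neg (hΛ i j)
      (by simpa using mul_pos ((hu i).lt_of_ne' hi) ((hv j).lt_of_ne' hj))
  have hsum := hcol j
  rw [← sum_filter_add_sum_filter_not univ (fun i => u i = 0)] at hsum
  have hsupp : ∑ i ∈ univ.filter (fun i => ¬ u i = 0), Λ i j * x i = -signedSum u x := by
    rw [signedSum_of_nonneg hu, ← sum_neg_distrib]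
    exact sum_congr rfl fun i hi => by rw [hΛ1 i (mem_filter.1 hi).2, neg_one_mul]
  rw [hsupp, add_neg_eq_zero] at hsum
  rw [← hsum]
  refine (abs_sum_le_sum_abs _ _).trans (sum_le_sum fun i _ => ?_)
  rw [abs_mul]
  exact mul_le_of_le_one_left (abs_nonneg _) (mem_signSet_iff.1 (hΛ i j)).1

theorem isCritical_prod_zero_of_abs_signedSum_eq (hu : ∀ i, 0 ≤ u i) (hv : ∀ j, 0 ≤ v j)
    (h : |signedSum u x| = offSupportNorm u x) : IsCritical u v x 0 := by
  let σ : ℝ := SignType.sign (signedSum u x)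
  refine ⟨fun i _ => if u i = 0 then σ * SignType.sign (x i) else -1, fun i j => ?_,
    fun i => by simp, fun j => ?_⟩
  · dsimp only
    split_ifs with hi
    · simpa [hi, mem_signSet_zero_iff, abs_mul] using
        mul_le_one₀ (abs_sign_le_one _) (abs_nonneg _) (abs_sign_le_one (x i))
    · exact neg_one_mem_signSet_iff.2 (by simpa using mul_nonneg (hu i) (hv j))
  · rw [← sum_filter_add_sum_filter_not univ (fun i => u i = 0)]
    have hzero : ∑ i ∈ univ.filter (fun i => u i = 0),
        (if u i = 0 then σ * SignType.sign (x i) else -1) * x i = signedSum u x := by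
      calc _ = σ * offSupportNorm u x := by
            rw [offSupportNorm, mul_sum]
            exact sum_congr rfl fun i hi => by
              rw [if_pos (mem_filter.1 hi).2, mul_assoc, sign_mul_self]
        _ = signedSum u x := by rw [← h, sign_mul_abs]
    have hsupp : ∑ i ∈ univ.filter (fun i => ¬ u i = 0),
        (if u i = 0 then σ * SignType.sign (x i) else -1) * x i = -signedSum u x := by
      rw [signedSum_of_nonneg hu, ← sum_neg_distrib]
      exact sum_congr rfl fun i hi => by rw [if_neg (mem_filter.1 hi).2, neg_one_mul]
    rw [hzero, hsupp, add_neg_cancel]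

theorem sum_abs_add_mul_mul_sub_eq (hu : ∀ i, 0 ≤ u i) {σ ε : ℝ} (hσ : |σ| = 1) (hε : 0 < ε)
    (hneg : ∀ i, u i ≠ 0 → (x i + ε * σ * u i) * (ε * σ) - u i < 0) :
    ∑ i, |(x i + ε * σ * u i) * (ε * σ) - u i|
      = (1 - ε ^ 2) * ∑ i, u i + ε * (offSupportNorm u x - σ * signedSum u x) := by
  have hσσ := mul_self_eq_one_of_abs_eq_one hσ
  rw [← sum_filter_add_sum_filter_not univ (fun i => u i = 0)]
  have hzero : ∑ i ∈ univ.filter (fun i => u i = 0), |(x i + ε * σ * u i) * (ε * σ) - u i|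
      = ε * offSupportNorm u x := by
    rw [offSupportNorm, mul_sum]
    refine sum_congr rfl fun i hi => ?_
    rw [(mem_filter.1 hi).2, mul_zero, add_zero, sub_zero, abs_mul, abs_mul, hσ, abs_of_pos hε]
    ring
  have hsupp : ∑ i ∈ univ.filter (fun i => ¬ u i = 0), |(x i + ε * σ * u i) * (ε * σ) - u i|
      = (1 - ε ^ 2) * ∑ i, u i - ε * σ * signedSum u x := by
    rw [signedSum_of_nonneg hu, ← sum_filter_ne_zero univ, mul_sum, mul_sum, ← sum_sub_distrib]
    refine sum_congr rfl fun i hi => ?_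
    rw [abs_of_neg (hneg i (mem_filter.1 hi).2)]
    linear_combination (-(ε ^ 2) * u i) * hσσ
  rw [hzero, hsupp]
  ring

theorem not_isLocalMin_of_abs_signedSum_eq (hu : ∀ i, 0 ≤ u i) (hv : ∀ j, 0 ≤ v j)
    (hu' : u ≠ 0) (hv' : v ≠ 0) (h : |signedSum u x| = offSupportNorm u x) :
    ¬ IsLocalMin (rankOneLoss u v) (x, 0) := by
  -- With `σ S = |S| = Z` the first-order terms cancel: along the curve the loss is
  -- `(1 - ε²) Σu Σv`.
  obtain ⟨σ, hσ, hσS⟩ : ∃ σ : ℝ, |σ| = 1 ∧ σ * signedSum u x = |signedSum u x| := by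
    rcases le_or_gt 0 (signedSum u x) with hS | hS
    · exact ⟨1, abs_one, by rw [one_mul, abs_of_nonneg hS]⟩
    · exact ⟨-1, by simp, by rw [abs_of_neg hS, neg_one_mul]⟩
  have hγ : Tendsto (fun ε : ℝ => (x + (ε * σ) • u, (ε * σ) • v)) (𝓝[>] 0) (𝓝 (x, 0)) := by
    have hc : Continuous fun ε : ℝ => (x + (ε * σ) • u, (ε * σ) • v) := by fun_prop
    simpa using (hc.tendsto 0).mono_left nhdsWithin_le_nhds
  have hneg : ∀ᶠ ε in 𝓝 (0 : ℝ), ∀ i, u i ≠ 0 → (x i + ε * σ * u i) * (ε * σ) - u i < 0 := by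
    refine eventually_all.2 fun i => ?_
    by_cases hi : u i = 0
    · exact Eventually.of_forall fun _ h => absurd hi h
    · have hc : Continuous fun ε : ℝ => (x i + ε * σ * u i) * (ε * σ) - u i := by fun_prop
      filter_upwards [hc.continuousAt.eventually_lt (g := fun _ => 0) continuousAt_const
        (by simpa using (hu i).lt_of_ne' hi)] with ε hε using fun _ => hε
  have hU : 0 < ∑ i, u i := by
    obtain ⟨i, hi⟩ := Function.ne_iff.1 hu'
    exact sum_pos' (fun i _ => hu i) ⟨i, mem_univ i, (hu i).lt_of_ne' hi⟩
  have hV : 0 < ∑ j, v j := by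
    obtain ⟨j, hj⟩ := Function.ne_iff.1 hv'
    exact sum_pos' (fun j _ => hv j) ⟨j, mem_univ j, (hv j).lt_of_ne' hj⟩
  refine not_isLocalMin_of_tendsto hγ ?_
  filter_upwards [nhdsWithin_le_nhds hneg, self_mem_nhdsWithin] with ε hε (hε0 : 0 < ε)
  rw [rankOneLoss_smul_right, rankOneLoss_prod_zero_of_nonneg hu hv]
  simp only [Pi.add_apply, Pi.smul_apply, smul_eq_mul, abs_of_nonneg (hv _)]
  rw [sum_abs_add_mul_mul_sub_eq hu hσ hε0 hε, hσS, h, sub_self, mul_zero, add_zero]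
  nlinarith [mul_pos (mul_pos hε0 hε0) (mul_pos hU hV)]

theorem isSaddle_prod_zero_iff_of_nonneg (hu : ∀ i, 0 ≤ u i) (hv : ∀ j, 0 ≤ v j)
    (hu' : u ≠ 0) (hv' : v ≠ 0) : IsSaddle u v x 0 ↔ SaddleCondition u v x 0 := by
  rw [saddleCondition_prod_zero_iff]
  refine ⟨fun ⟨hc, hmin⟩ => ?_, fun h => ⟨isCritical_prod_zero_of_abs_signedSum_eq hu hv h,
    not_isLocalMin_of_abs_signedSum_eq hu hv hu' hv' h⟩⟩
  exact (abs_signedSum_le_of_isCritical hu hv hv' hc).eq_of_not_lt fun hlt =>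
    hmin (isLocalMin_of_abs_signedSum_lt hu hv hlt)

theorem balancedBelow_iff_of_nonneg (hu : ∀ i, 0 ≤ u i) (hv : ∀ j, 0 ≤ v j) :
    BalancedBelow u v x y ↔ (∀ i, u i = 0 → x i = 0) ∧ (∀ j, v j = 0 → y j = 0) ∧
      ∑ i, x i = 0 ∧ ∑ j, y j = 0 ∧ ∀ i j, x i * y j ≤ u i * v j := by
  have hprod : ∀ i j, u i * v j ≠ 0 → 0 < u i * v j := fun i j h =>
    (mul_nonneg (hu i) (hv j)).lt_of_ne' h
  constructor
  · rintro ⟨hsx, hsy, hle, hx, hy⟩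
    refine ⟨hx, hy, (sum_eq_signedSum_of_nonneg hu hx).trans hsx,
      (sum_eq_signedSum_of_nonneg hv hy).trans hsy, fun i j => ?_⟩
    by_cases h : u i * v j = 0
    · rcases mul_eq_zero.1 h with h | h
      · simpa [hx i h] using mul_nonneg (hu i) (hv j)
      · simpa [hy j h] using mul_nonneg (hu i) (hv j)
    · exact (div_le_one (hprod i j h)).1 (hle i j h)
  · rintro ⟨hx, hy, hsx, hsy, hle⟩
    exact ⟨(sum_eq_signedSum_of_nonneg hu hx).symm.trans hsx,
      (sum_eq_signedSum_of_nonneg hv hy).symm.trans hsy,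
      fun i j h => (div_le_one (hprod i j h)).2 (hle i j), hx, hy⟩

theorem sum_min_zero_neg (hx : ∑ i, x i = 0) (hx0 : x ≠ 0) : ∑ i, min (x i) 0 < 0 := by
  obtain ⟨i₀, hi₀⟩ := Function.ne_iff.1 hx0
  obtain ⟨i, -, hi⟩ := exists_pos_of_sum_zero_of_exists_nonzero (-x) (by simp [hx])
    ⟨i₀, mem_univ _, by simpa using hi₀⟩
  exact sum_neg' (fun j _ => min_le_right _ _)
    ⟨i, mem_univ i, min_lt_iff.2 (Or.inl (by simpa using hi))⟩

theorem mul_le_of_shrink_neg {a b c ε : ℝ} (hε0 : 0 ≤ ε) (hε1 : ε ≤ 1) (hab : a * b ≤ c)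
    (hc : 0 ≤ c) : (a - ε * min a 0) * (b - ε * min b 0) ≤ c := by
  rcases le_or_gt 0 a with ha | ha <;> rcases le_or_gt 0 b with hb | hb
  · simpa [min_eq_right ha, min_eq_right hb] using hab
  · rw [min_eq_right ha, min_eq_left hb.le]
    nlinarith [mul_nonneg ha (mul_nonneg (sub_nonneg.2 hε1) (neg_nonneg.2 hb.le))]
  · rw [min_eq_left ha.le, min_eq_right hb]
    nlinarith [mul_nonneg hb (mul_nonneg (sub_nonneg.2 hε1) (neg_nonneg.2 ha.le))]
  · rw [min_eq_left ha.le, min_eq_left hb.le]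
    have hab0 : 0 ≤ a * b := mul_nonneg_of_nonpos_of_nonpos ha.le hb.le
    nlinarith [mul_le_of_le_one_left hab0 (by nlinarith : (1 - ε) * (1 - ε) ≤ 1)]

theorem not_isLocalMin_of_forall_mul_le (hu : ∀ i, 0 ≤ u i) (hv : ∀ j, 0 ≤ v j)
    (h : ∀ i j, x i * y j ≤ u i * v j) (hx : ∑ i, x i = 0) (hy : ∑ j, y j = 0) (hx0 : x ≠ 0)
    (hy0 : y ≠ 0) : ¬ IsLocalMin (rankOneLoss u v) (x, y) := by
  -- Shrinking the negative entries keeps `x yᵀ ≤ u vᵀ` and makes `Σ x, Σ y > 0`.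
  let γ : ℝ → (ι → ℝ) × (κ → ℝ) := fun ε =>
    (x - ε • fun i => min (x i) 0, y - ε • fun j => min (y j) 0)
  have hγ : Tendsto γ (𝓝[>] 0) (𝓝 (x, y)) := by
    have hc : Continuous γ := by fun_prop
    simpa [γ] using (hc.tendsto 0).mono_left nhdsWithin_le_nhds
  refine not_isLocalMin_of_tendsto hγ ?_
  filter_upwards [self_mem_nhdsWithin, nhdsWithin_le_nhds (Iio_mem_nhds one_pos)]
    with ε (hε0 : 0 < ε) (hε1 : ε < 1)
  have hle : ∀ i j, (γ ε).1 i * (γ ε).2 j ≤ u i * v j := fun i j =>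
    mul_le_of_shrink_neg hε0.le hε1.le (h i j) (mul_nonneg (hu i) (hv j))
  rw [rankOneLoss_eq_of_forall_mul_le hle, rankOneLoss_eq_of_forall_mul_le h, hx, hy]
  simp only [γ, Pi.sub_apply, Pi.smul_apply, smul_eq_mul, sum_sub_distrib, ← mul_sum, hx, hy]
  nlinarith [mul_pos (mul_pos hε0 hε0) (mul_pos_of_neg_of_neg (sum_min_zero_neg hx hx0)
    (sum_min_zero_neg hy hy0))]

theorem isSaddle_iff_balancedBelow_of_nonneg (hu : ∀ i, 0 ≤ u i) (hv : ∀ j, 0 ≤ v j)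
    (hx : x ≠ 0) (hy : y ≠ 0) : IsSaddle u v x y ↔ BalancedBelow u v x y := by
  rw [balancedBelow_iff_of_nonneg hu hv]
  constructor
  · rintro ⟨hc, hmin⟩
    have hxu : ∀ i, u i = 0 → x i = 0 := fun i => hc.eq_zero_of_eq_zero hy
    have hyv : ∀ j, v j = 0 → y j = 0 := fun j => hc.swap.eq_zero_of_eq_zero hx
    have hx' : (fun i : {i // u i ≠ 0} => x i) ≠ 0 := by
      obtain ⟨i, hi⟩ := Function.ne_iff.1 hx
      exact Function.ne_iff.2 ⟨⟨i, fun h => hi (hxu i h)⟩, hi⟩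
    have hy' : (fun j : {j // v j ≠ 0} => y j) ≠ 0 := by
      obtain ⟨j, hj⟩ := Function.ne_iff.1 hy
      exact Function.ne_iff.2 ⟨⟨j, fun h => hj (hyv j h)⟩, hj⟩
    rcases (hc.restrict hxu hyv).mul_eq_or_balanced
      (fun i : {i // u i ≠ 0} => (hu i).lt_of_ne' i.2)
      (fun j : {j // v j ≠ 0} => (hv j).lt_of_ne' j.2) hx' hy' with heq | ⟨hsx, hsy, hle⟩
    · exact absurd (isLocalMin_of_forall_mul_eq
        (forall_mul_of_forall_subtype (r := (· = ·)) rfl hxu hyv heq)) hmin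
    · refine ⟨hxu, hyv, ?_, ?_, forall_mul_of_forall_subtype le_rfl hxu hyv hle⟩
      · rwa [sum_subtype_eq_sum_of_eq_zero fun i hi => hxu i (not_not.1 hi)] at hsx
      · rwa [sum_subtype_eq_sum_of_eq_zero fun j hj => hyv j (not_not.1 hj)] at hsy
  · rintro ⟨-, -, hsx, hsy, hle⟩
    exact ⟨isCritical_of_forall_mul_le hle hsx hsy,
      not_isLocalMin_of_forall_mul_le hu hv hle hsx hsy hx hy⟩

theorem isSaddle_iff_saddleCondition_of_nonneg (hu : ∀ i, 0 ≤ u i) (hv : ∀ j, 0 ≤ v j)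
    (hu' : u ≠ 0) (hv' : v ≠ 0) : IsSaddle u v x y ↔ SaddleCondition u v x y := by
  rcases eq_or_ne y 0 with rfl | hy
  · exact isSaddle_prod_zero_iff_of_nonneg hu hv hu' hv'
  rcases eq_or_ne x 0 with rfl | hx
  · rw [← isSaddle_swap, ← saddleCondition_swap]
    exact isSaddle_prod_zero_iff_of_nonneg hv hu hv' hu'
  rw [saddleCondition_iff_balancedBelow hx hy]
  exact isSaddle_iff_balancedBelow_of_nonneg hu hv hx hy

end Nonneg

theorem isSaddle_iff_saddleCondition [Fintype ι] [Fintype κ] (hu : u ≠ 0) (hv : v ≠ 0) :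
    IsSaddle u v x y ↔ SaddleCondition u v x y := by
  obtain ⟨ε, hε, hεu⟩ := exists_abs_eq_one_mul_nonneg u
  obtain ⟨δ, hδ, hδv⟩ := exists_abs_eq_one_mul_nonneg v
  rw [← isSaddle_flip hε hδ, ← saddleCondition_flip hε hδ]
  exact isSaddle_iff_saddleCondition_of_nonneg hεu hδv
    (by rwa [Ne, mul_eq_zero_iff_of_abs_eq_one hε]) (by rwa [Ne, mul_eq_zero_iff_of_abs_eq_one hδ])

theorem saddle_point_characterization_general (m n : ℕ)
    (u : Fin m → ℝ) (v : Fin n → ℝ) (hu : u ≠ 0) (hv : v ≠ 0)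
    (x : Fin m → ℝ) (y : Fin n → ℝ) :
    ((∃ Λ : Matrix (Fin m) (Fin n) ℝ,
        (∀ i j, Λ i j ∈ signSet (x i * y j - u i * v j)) ∧
        (∀ i, ∑ j, Λ i j * y j = 0) ∧ (∀ j, ∑ i, Λ i j * x i = 0)) ∧
      ¬ IsLocalMin (fun q : (Fin m → ℝ) × (Fin n → ℝ) =>
          ∑ i, ∑ j, |q.1 i * q.2 j - u i * v j|) (x, y))
    ↔
    ((|∑ i ∈ Finset.univ.filter (fun i => u i ≠ 0), Real.sign (u i) * x i|
          = (∑ i ∈ Finset.univ.filter (fun i => u i = 0), |x i|) ∧ y = 0) ∨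
      (x = 0 ∧
        |∑ j ∈ Finset.univ.filter (fun j => v j ≠ 0), Real.sign (v j) * y j|
          = ∑ j ∈ Finset.univ.filter (fun j => v j = 0), |y j|) ∨
      ((∑ i ∈ Finset.univ.filter (fun i => u i ≠ 0), Real.sign (u i) * x i) = 0 ∧
        (∑ j ∈ Finset.univ.filter (fun j => v j ≠ 0), Real.sign (v j) * y j) = 0 ∧
        (∀ i j, u i * v j ≠ 0 → x i * y j / (u i * v j) ≤ 1) ∧
        (∀ i, u i = 0 → x i = 0) ∧ (∀ j, v j = 0 → y j = 0))) :=
  isSaddle_iff_saddleCondition hu hv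

/-- If `u ≠ 0` and `v ≠ 0`, then `(x,y)` is a saddle point of
`f(x,y) = Σᵢ Σⱼ |xᵢ yⱼ − uᵢ vⱼ|` (a critical point that is not a local minimum) iff one of
the conditions (a)-(c) holds. -/
theorem saddle_point_characterization (m n : ℕ) (hm : 1 ≤ m) (hn : 1 ≤ n)
    (u : Fin m → ℝ) (v : Fin n → ℝ) (hu : u ≠ 0) (hv : v ≠ 0)
    (x : Fin m → ℝ) (y : Fin n → ℝ) :
    ((∃ Λ : Matrix (Fin m) (Fin n) ℝ,
        (∀ i j, Λ i j ∈ signSet (x i * y j - u i * v j)) ∧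
        (∀ i, ∑ j, Λ i j * y j = 0) ∧ (∀ j, ∑ i, Λ i j * x i = 0)) ∧
      ¬ IsLocalMin (fun q : (Fin m → ℝ) × (Fin n → ℝ) =>
          ∑ i, ∑ j, |q.1 i * q.2 j - u i * v j|) (x, y))
    ↔
    ((|∑ i ∈ Finset.univ.filter (fun i => u i ≠ 0), Real.sign (u i) * x i|
          = (∑ i ∈ Finset.univ.filter (fun i => u i = 0), |x i|) ∧ y = 0) ∨
      (x = 0 ∧
        |∑ j ∈ Finset.univ.filter (fun j => v j ≠ 0), Real.sign (v j) * y j|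
          = ∑ j ∈ Finset.univ.filter (fun j => v j = 0), |y j|) ∨
      ((∑ i ∈ Finset.univ.filter (fun i => u i ≠ 0), Real.sign (u i) * x i) = 0 ∧
        (∑ j ∈ Finset.univ.filter (fun j => v j ≠ 0), Real.sign (v j) * y j) = 0 ∧
        (∀ i j, u i * v j ≠ 0 → x i * y j / (u i * v j) ≤ 1) ∧
        (∀ i, u i = 0 → x i = 0) ∧ (∀ j, v j = 0 → y j = 0))) :=
  saddle_point_characterization_general m n u v hu hv x y
end

section
/- Assume u ≠ 0 and v ≠ 0. For every saddle point (x,y) of f there exist θ ∈ ℝ \ {0} and ε > 0 such that for all t ∈ (0, ε), f((1−t)·(x,y) + t·(θu, v/θ)) < f(x,y); that is, (θu, v/θ) − (x,y) is a direction of descent pointing from (x,y) toward the global minimum (θu, v/θ). -/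
open scoped Classical

/-!
Along the segment from `(x, y)` to `(θ u, v / θ)` the entry `x i * y j - u i * v j` becomes
`(1 - t) ^ 2 * c i j + t * (1 - t) * d i j`, with `d = pathCoeff u v x y θ`. Pairing with the Clarke
multiplier `Λ` gives `∑ Λ c = f (x, y)` and, since `Λ y = 0` and `Λᵀ x = 0`, `∑ Λ d = 2 f (x, y)`.
For small `t` the entries with `c i j ≠ 0` keep the sign `Λ i j`; if also `Λ i j * d i j = |d i j|`
wherever `c i j = 0`, then `f` equals `(1 - t ^ 2) f (x, y)` along the segment.

Such a `θ` is found row by row. A row with `x i = α * u i`, `u i ≠ 0` makes `α` a minimiser of the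
convex function `α ↦ ∑ j, |α * y j - v j|`, and on its kinks `d i j = u i * y j * (θ - α) ^ 2 / θ`.
Monotonicity of the subdifferential leaves at most two such `α` carrying kinks and fixes the sign of
`Λ` on them, which the sign of `θ` can match. The one case no `θ` handles, `α = 0` with `0` interior
to the subdifferential, forces `x = 0` and makes `(x, y)` a local minimum.
-/

open Finset Filter Topology
open scoped Matrix

theorem Real.sign_mul (a b : ℝ) : Real.sign (a * b) = Real.sign a * Real.sign b := by
  rcases lt_trichotomy a 0 with ha | rfl | ha <;> rcases lt_trichotomy b 0 with hb | rfl | hb <;>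
    simp [Real.sign_of_neg, Real.sign_of_pos, mul_pos_of_neg_of_neg, mul_neg_of_neg_of_pos,
      mul_neg_of_pos_of_neg, *]

theorem Real.sign_mul_self (r : ℝ) : Real.sign r * r = |r| := by
  rcases lt_trichotomy r 0 with h | rfl | h <;>
    simp [Real.sign_of_neg, Real.sign_of_pos, abs_of_neg, abs_of_pos, *]

theorem Real.abs_sign_le_one (r : ℝ) : |Real.sign r| ≤ 1 := by
  rcases Real.sign_apply_eq r with h | h | h <;> simp [h]

theorem Real.abs_sign_of_ne_zero {r : ℝ} (hr : r ≠ 0) : |Real.sign r| = 1 := by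
  rcases Real.sign_apply_eq_of_ne_zero r hr with h | h <;> simp [h]

theorem Real.sign_mul_sign_of_ne_zero {r : ℝ} (hr : r ≠ 0) : Real.sign r * Real.sign r = 1 := by
  rcases Real.sign_apply_eq_of_ne_zero r hr with h | h <;> simp [h]

theorem Real.sign_mul_le_abs (r s : ℝ) : Real.sign r * s ≤ |s| :=
  calc Real.sign r * s ≤ |Real.sign r| * |s| := by rw [← abs_mul]; exact le_abs_self _
    _ ≤ |s| := mul_le_of_le_one_left (abs_nonneg s) (Real.abs_sign_le_one r)

section SignSet

variable {l t : ℝ}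

theorem mul_eq_abs_of_mem_signSet (h : l ∈ signSet t) : l * t = |t| := by
  unfold signSet at h
  rcases lt_trichotomy t 0 with ht | rfl | ht
  · simp_all [abs_of_neg]
  · simp
  · simp_all [ht.not_gt, abs_of_pos]

theorem abs_le_one_of_mem_signSet (h : l ∈ signSet t) : |l| ≤ 1 := by
  unfold signSet at h
  rcases lt_trichotomy t 0 with ht | rfl | ht
  · simp_all
  · simpa [abs_le] using h
  · simp_all [ht.not_gt]

theorem eq_sign_of_mem_signSet (h : l ∈ signSet t) (ht : t ≠ 0) : l = Real.sign t := by
  unfold signSet at h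
  rcases ht.lt_or_gt with ht | ht
  · simp_all [Real.sign_of_neg]
  · simp_all [ht.not_gt, Real.sign_of_pos]

end SignSet

theorem mul_eq_zero_of_mem_signSet_of_sum_eq_zero {ι : Type*} [Fintype ι] {x ℓ : ι → ℝ} {b : ℝ}
    (hℓ : ∀ i, ℓ i ∈ signSet (x i * b)) (hsum : ∑ i, ℓ i * x i = 0) (i : ι) : x i * b = 0 := by
  have htotal : ∑ k, |x k * b| = 0 := by
    simp_rw [← mul_eq_abs_of_mem_signSet (hℓ _), ← mul_assoc, ← sum_mul, hsum, zero_mul]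
  exact abs_eq_zero.1 ((sum_eq_zero_iff_of_nonneg fun k _ => abs_nonneg _).1 htotal i (mem_univ i))

theorem eventually_mul_eq_abs_of_mem_signSet {l c d : ℝ} (hl : l ∈ signSet c)
    (hd : c = 0 → l * d = |d|) :
    ∀ᶠ t in 𝓝[>] 0,
      l * ((1 - t) ^ 2 * c + t * (1 - t) * d) = |(1 - t) ^ 2 * c + t * (1 - t) * d| := by
  by_cases hc : c = 0
  · filter_upwards [Ioo_mem_nhdsGT one_pos] with t ⟨ht0, ht1⟩
    rw [hc, mul_zero, zero_add, abs_mul, abs_of_pos (mul_pos ht0 (sub_pos.2 ht1)), ← hd hc]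
    ring
  have hl1 : |l| = 1 := by rw [eq_sign_of_mem_signSet hl hc, Real.abs_sign_of_ne_zero hc]
  have hpos : 0 < l * c := by rw [mul_eq_abs_of_mem_signSet hl]; exact abs_pos.2 hc
  have hlim : Tendsto (fun t => l * ((1 - t) * c + t * d)) (𝓝[>] 0) (𝓝 (l * c)) := by
    have hcont : Continuous fun t : ℝ => l * ((1 - t) * c + t * d) := by fun_prop
    simpa using (hcont.tendsto 0).mono_left nhdsWithin_le_nhds
  filter_upwards [hlim.eventually (lt_mem_nhds hpos), Ioo_mem_nhdsGT one_pos] with t ht ⟨_, ht1⟩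
  have hg : |(1 - t) * c + t * d| = l * ((1 - t) * c + t * d) := by
    rw [← abs_of_pos ht, abs_mul, hl1, one_mul]
  calc l * ((1 - t) ^ 2 * c + t * (1 - t) * d) = (1 - t) * (l * ((1 - t) * c + t * d)) := by ring
    _ = |(1 - t) * ((1 - t) * c + t * d)| := by rw [abs_mul, abs_of_pos (sub_pos.2 ht1), hg]
    _ = |(1 - t) ^ 2 * c + t * (1 - t) * d| := by ring_nf

section Subgradient

variable {κ : Type*} [Fintype κ]

/- The subdifferential of the convex function `α ↦ ∑ j, |α * y j - v j|` at `α` is the interval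
`[c - r, c + r]`, where `c = subgradCenter v y α` and `r = subgradRadius v y α`. -/
noncomputable def subgradCenter (v y : κ → ℝ) (α : ℝ) : ℝ :=
  ∑ j, Real.sign (α * y j - v j) * y j

noncomputable def subgradRadius (v y : κ → ℝ) (α : ℝ) : ℝ :=
  ∑ j with α * y j = v j, |y j|

theorem ite_abs_add_ite_abs_le_sign_sub_sign_mul (a b : ℝ) :
    (if a = 0 then |b - a| else 0) + (if b = 0 then |b - a| else 0)
      ≤ (Real.sign b - Real.sign a) * (b - a) := by
  have hab := Real.sign_mul_le_abs a b
  have hba := Real.sign_mul_le_abs b a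
  rw [show (Real.sign b - Real.sign a) * (b - a)
      = (|b| - Real.sign a * b) + (|a| - Real.sign b * a) by
    rw [← Real.sign_mul_self a, ← Real.sign_mul_self b]; ring]
  split_ifs
  · subst_vars; simp
  · subst_vars; simp
  · subst_vars; simp
  · linarith

variable {v y : κ → ℝ} {α β : ℝ}

theorem subgradRadius_add_le (hαβ : α < β) :
    subgradRadius v y α + subgradRadius v y β ≤ subgradCenter v y β - subgradCenter v y α := by
  have hs : 0 < β - α := sub_pos.2 hαβ
  have hterm : ∀ j, (β - α) * ((if α * y j = v j then |y j| else 0)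
      + (if β * y j = v j then |y j| else 0))
        ≤ (β - α) * (Real.sign (β * y j - v j) * y j - Real.sign (α * y j - v j) * y j) := by
    intro j
    have key := ite_abs_add_ite_abs_le_sign_sub_sign_mul (α * y j - v j) (β * y j - v j)
    have hdiff : β * y j - v j - (α * y j - v j) = (β - α) * y j := by ring
    simp only [hdiff, abs_mul, abs_of_pos hs, sub_eq_zero] at key
    exact (by split_ifs <;> ring : _ = _).trans_le (key.trans_eq (by ring))
  refine le_of_mul_le_mul_left ?_ hs
  calc (β - α) * (subgradRadius v y α + subgradRadius v y β)
      = ∑ j, (β - α) * ((if α * y j = v j then |y j| else 0)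
          + (if β * y j = v j then |y j| else 0)) := by
        rw [subgradRadius, subgradRadius, sum_filter, sum_filter, ← sum_add_distrib, mul_sum]
    _ ≤ _ := sum_le_sum fun j _ => hterm j
    _ = (β - α) * (subgradCenter v y β - subgradCenter v y α) := by
        rw [subgradCenter, subgradCenter, ← sum_sub_distrib, mul_sum]

theorem subgradCenter_eq_of_lt (hαβ : α < β)
    (hα : |subgradCenter v y α| ≤ subgradRadius v y α)
    (hβ : |subgradCenter v y β| ≤ subgradRadius v y β) :
    subgradCenter v y α = -subgradRadius v y α ∧ subgradCenter v y β = subgradRadius v y β := by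
  have := subgradRadius_add_le (v := v) (y := y) hαβ
  rw [abs_le] at hα hβ
  constructor <;> linarith

theorem exists_forall_eq_or_subgradCenter_eq (S : Set ℝ)
    (hS : ∀ α ∈ S, |subgradCenter v y α| ≤ subgradRadius v y α)
    (h0 : 0 ∈ S → |subgradCenter v y 0| = subgradRadius v y 0) :
    ∃ θ ≠ 0, ∀ α ∈ S,
      α = θ ∨ subgradCenter v y α = -(Real.sign θ * subgradRadius v y α) := by
  by_cases hleft : ∀ α ∈ S, subgradCenter v y α = -subgradRadius v y α
  · exact ⟨1, one_ne_zero, fun α hα => Or.inr (by simp [hleft α hα])⟩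
  push Not at hleft
  obtain ⟨β, hβS, hβ⟩ := hleft
  have below : ∀ α ∈ S, α ≠ β → α < β ∧ subgradCenter v y α = -subgradRadius v y α := by
    intro α hα hne
    rcases hne.lt_or_gt with h | h
    · exact ⟨h, (subgradCenter_eq_of_lt h (hS α hα) (hS β hβS)).1⟩
    · exact absurd (subgradCenter_eq_of_lt h (hS β hβS) (hS α hα)).1 hβ
  by_cases hβpos : 0 < β
  · refine ⟨β, hβpos.ne', fun α hα => or_iff_not_imp_left.2 fun hne => ?_⟩
    simp [Real.sign_of_pos hβpos, (below α hα hne).2]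
  by_cases hright : ∀ α ∈ S, subgradCenter v y α = subgradRadius v y α
  · exact ⟨-1, by norm_num, fun α hα => Or.inr (by simp [Real.sign_of_neg, hright α hα])⟩
  push Not at hright
  obtain ⟨γ, hγS, hγ⟩ := hright
  have above : ∀ α ∈ S, α ≠ γ → γ < α ∧ subgradCenter v y α = subgradRadius v y α := by
    intro α hα hne
    rcases hne.lt_or_gt with h | h
    · exact absurd (subgradCenter_eq_of_lt h (hS α hα) (hS γ hγS)).2 hγ
    · exact ⟨h, (subgradCenter_eq_of_lt h (hS γ hγS) (hS α hα)).2⟩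
  have hγneg : γ < 0 := by
    by_cases hγβ : γ = β
    · subst hγβ
      refine (not_lt.1 hβpos).lt_of_ne fun hγ0 => ?_
      subst hγ0
      rcases (abs_eq ((abs_nonneg _).trans (hS 0 hγS))).1 (h0 hγS) with h | h
      exacts [hγ h, hβ h]
    · exact (below γ hγS hγβ).1.trans_le (not_lt.1 hβpos)
  refine ⟨γ, hγneg.ne, fun α hα => or_iff_not_imp_left.2 fun hne => ?_⟩
  simp [Real.sign_of_neg hγneg, (above α hα hne).2]

variable {ℓ : κ → ℝ} {μ θ : ℝ}

-- Below, `ℓ` is a row `Λ i` of a critical multiplier at a row with `x i = α * u i`, and `μ = u i`.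

theorem sum_filter_mul_eq_neg_sign_mul_subgradCenter (hμ : μ ≠ 0)
    (hℓ : ∀ j, ℓ j ∈ signSet (μ * (α * y j - v j))) (hsum : ∑ j, ℓ j * y j = 0) :
    ∑ j with α * y j = v j, ℓ j * y j = -(Real.sign μ * subgradCenter v y α) := by
  have hsplit : ∀ j, ℓ j * y j = (if α * y j = v j then ℓ j * y j else 0)
      + Real.sign μ * (Real.sign (α * y j - v j) * y j) := by
    intro j
    split_ifs with hj
    · simp [hj]
    · rw [eq_sign_of_mem_signSet (hℓ j) (mul_ne_zero hμ (sub_ne_zero.2 hj)), Real.sign_mul]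
      ring
  rw [sum_congr rfl fun j _ => hsplit j, sum_add_distrib, ← mul_sum] at hsum
  rw [sum_filter, subgradCenter]
  linarith

theorem abs_subgradCenter_le_subgradRadius (hμ : μ ≠ 0)
    (hℓ : ∀ j, ℓ j ∈ signSet (μ * (α * y j - v j))) (hsum : ∑ j, ℓ j * y j = 0) :
    |subgradCenter v y α| ≤ subgradRadius v y α :=
  calc |subgradCenter v y α| = |∑ j with α * y j = v j, ℓ j * y j| := by
        rw [sum_filter_mul_eq_neg_sign_mul_subgradCenter hμ hℓ hsum, abs_neg, abs_mul,
          Real.abs_sign_of_ne_zero hμ, one_mul]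
    _ ≤ ∑ j with α * y j = v j, |ℓ j * y j| := abs_sum_le_sum_abs _ _
    _ ≤ subgradRadius v y α := sum_le_sum fun j _ => by
        rw [abs_mul]
        exact mul_le_of_le_one_left (abs_nonneg _) (abs_le_one_of_mem_signSet (hℓ j))

theorem sign_mul_mul_eq_abs_of_subgradCenter_eq (hμ : μ ≠ 0)
    (hℓ : ∀ j, ℓ j ∈ signSet (μ * (α * y j - v j))) (hsum : ∑ j, ℓ j * y j = 0) (hθ : θ ≠ 0)
    (hC : subgradCenter v y α = -(Real.sign θ * subgradRadius v y α)) {j : κ}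
    (hj : α * y j = v j) : Real.sign θ * (ℓ j * (μ * y j)) = |μ * y j| := by
  have hle : ∀ k ∈ ({k | α * y k = v k} : Finset κ),
      Real.sign θ * (ℓ k * (μ * y k)) ≤ |μ * y k| := fun k _ =>
    calc Real.sign θ * (ℓ k * (μ * y k)) ≤ |ℓ k * (μ * y k)| := Real.sign_mul_le_abs _ _
      _ ≤ |μ * y k| := by
        rw [abs_mul]
        exact mul_le_of_le_one_left (abs_nonneg _) (abs_le_one_of_mem_signSet (hℓ k))
  have hsum_eq : ∑ k with α * y k = v k, Real.sign θ * (ℓ k * (μ * y k))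
      = ∑ k with α * y k = v k, |μ * y k| := by
    calc _ = Real.sign θ * μ * ∑ k with α * y k = v k, ℓ k * y k := by
          rw [mul_sum]; exact sum_congr rfl fun k _ => by ring
      _ = |μ| * subgradRadius v y α := by
          rw [sum_filter_mul_eq_neg_sign_mul_subgradCenter hμ hℓ hsum, hC, ← Real.sign_mul_self μ]
          linear_combination
            (μ * Real.sign μ * subgradRadius v y α) * Real.sign_mul_sign_of_ne_zero hθ
      _ = _ := by simp only [subgradRadius, mul_sum, abs_mul]
  exact (sum_eq_sum_iff_of_le hle).1 hsum_eq j (by simpa using hj)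

end Subgradient

section Objective

variable {ι κ : Type*} {u : ι → ℝ} {v : κ → ℝ} {x : ι → ℝ} {y : κ → ℝ} {Λ : Matrix ι κ ℝ}

noncomputable def pathCoeff (u : ι → ℝ) (v : κ → ℝ) (x : ι → ℝ) (y : κ → ℝ) (θ : ℝ) (i : ι)
    (j : κ) : ℝ :=
  θ * (u i * y j) + θ⁻¹ * (x i * v j) - 2 * (u i * v j)

theorem path_mul_sub_eq {θ : ℝ} (hθ : θ ≠ 0) (t : ℝ) (i : ι) (j : κ) :
    ((1 - t) • x + t • (θ • u)) i * ((1 - t) • y + t • (θ⁻¹ • v)) j - u i * v j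
      = (1 - t) ^ 2 * (x i * y j - u i * v j) + t * (1 - t) * pathCoeff u v x y θ i j := by
  simp only [Pi.add_apply, Pi.smul_apply, smul_eq_mul, pathCoeff]
  linear_combination (t ^ 2 * u i * v j) * mul_inv_cancel₀ hθ

def IsAligned (u : ι → ℝ) (v : κ → ℝ) (x : ι → ℝ) (y : κ → ℝ) (Λ : Matrix ι κ ℝ) (θ : ℝ) :
    Prop :=
  ∀ i j, x i * y j - u i * v j = 0 → Λ i j * pathCoeff u v x y θ i j = |pathCoeff u v x y θ i j|

theorem IsAligned.of_transpose {θ : ℝ} (h : IsAligned v u y x Λᵀ θ) :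
    IsAligned u v x y Λ θ⁻¹ := by
  intro i j hc
  have hcoeff : pathCoeff v u y x θ j i = pathCoeff u v x y θ⁻¹ i j := by
    rw [pathCoeff, pathCoeff, inv_inv]; ring
  simpa only [hcoeff, Matrix.transpose_apply] using h j i (by linear_combination hc)

variable [Fintype ι] [Fintype κ]

def objective (u : ι → ℝ) (v : κ → ℝ) (p : (ι → ℝ) × (κ → ℝ)) : ℝ :=
  ∑ i, ∑ j, |p.1 i * p.2 j - u i * v j|

theorem objective_nonneg (u : ι → ℝ) (v : κ → ℝ) (p : (ι → ℝ) × (κ → ℝ)) :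
    0 ≤ objective u v p :=
  sum_nonneg fun _ _ => sum_nonneg fun _ _ => abs_nonneg _

theorem objective_pos_of_not_isLocalMin {p : (ι → ℝ) × (κ → ℝ)}
    (h : ¬IsLocalMin (objective u v) p) : 0 < objective u v p := by
  refine (objective_nonneg u v p).lt_of_ne fun h0 => h (Eventually.of_forall fun q => ?_)
  rw [← h0]
  exact objective_nonneg u v q

theorem objective_swap (u : ι → ℝ) (v : κ → ℝ) (p : (ι → ℝ) × (κ → ℝ)) :
    objective v u p.swap = objective u v p := by
  rw [objective, objective, sum_comm]
  simp only [Prod.fst_swap, Prod.snd_swap, mul_comm]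

theorem IsLocalMin.of_objective_swap (h : IsLocalMin (objective v u) (y, x)) :
    IsLocalMin (objective u v) (x, y) := by
  have := h.comp_continuous (g := Prod.swap) (b := (x, y)) continuous_swap.continuousAt
  simpa only [Function.comp_def, objective_swap] using this

structure IsCriticalMultiplier (u : ι → ℝ) (v : κ → ℝ) (x : ι → ℝ) (y : κ → ℝ)
    (Λ : Matrix ι κ ℝ) : Prop where
  mem_signSet : ∀ i j, Λ i j ∈ signSet (x i * y j - u i * v j)
  sum_mul_right : ∀ i, ∑ j, Λ i j * y j = 0
  sum_mul_left : ∀ j, ∑ i, Λ i j * x i = 0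

namespace IsCriticalMultiplier

theorem transpose (hΛ : IsCriticalMultiplier u v x y Λ) : IsCriticalMultiplier v u y x Λᵀ where
  mem_signSet j i := by
    simpa only [mul_comm, Matrix.transpose_apply] using hΛ.mem_signSet i j
  sum_mul_right := hΛ.sum_mul_left
  sum_mul_left := hΛ.sum_mul_right

theorem sum_sum_mul_mul_right (hΛ : IsCriticalMultiplier u v x y Λ) (a : ι → ℝ) :
    ∑ i, ∑ j, Λ i j * (a i * y j) = 0 := by
  simp_rw [mul_left_comm _ (a _), ← mul_sum, hΛ.sum_mul_right, mul_zero, sum_const_zero]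

theorem sum_sum_mul_mul_left (hΛ : IsCriticalMultiplier u v x y Λ) (b : κ → ℝ) :
    ∑ i, ∑ j, Λ i j * (x i * b j) = 0 := by
  rw [sum_comm]
  simp_rw [mul_comm (x _), mul_left_comm _ (b _), ← mul_sum, hΛ.sum_mul_left, mul_zero,
    sum_const_zero]

theorem sum_sum_mul_eq_objective (hΛ : IsCriticalMultiplier u v x y Λ) :
    ∑ i, ∑ j, Λ i j * (x i * y j - u i * v j) = objective u v (x, y) :=
  sum_congr rfl fun i _ => sum_congr rfl fun j _ => mul_eq_abs_of_mem_signSet (hΛ.mem_signSet i j)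

theorem sum_sum_mul_pathCoeff (hΛ : IsCriticalMultiplier u v x y Λ) (θ : ℝ) :
    ∑ i, ∑ j, Λ i j * pathCoeff u v x y θ i j = 2 * objective u v (x, y) := by
  have hcoeff : ∀ i j, Λ i j * pathCoeff u v x y θ i j = θ * (Λ i j * (u i * y j))
      + θ⁻¹ * (Λ i j * (x i * v j)) - 2 * (Λ i j * (x i * y j))
      + 2 * (Λ i j * (x i * y j - u i * v j)) := fun i j => by rw [pathCoeff]; ring
  simp only [hcoeff, sum_add_distrib, sum_sub_distrib, ← mul_sum, hΛ.sum_sum_mul_mul_right,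
    hΛ.sum_sum_mul_mul_left, hΛ.sum_sum_mul_eq_objective]
  ring

theorem mul_eq_zero_of_right_eq_zero (hΛ : IsCriticalMultiplier u v x y Λ) {j : κ}
    (hv : v j = 0) (i : ι) : x i * y j = 0 :=
  mul_eq_zero_of_mem_signSet_of_sum_eq_zero
    (fun i => by simpa [hv] using hΛ.mem_signSet i j) (hΛ.sum_mul_left j) i

theorem mul_eq_zero_of_left_eq_zero (hΛ : IsCriticalMultiplier u v x y Λ) {i : ι}
    (hu : u i = 0) (j : κ) : x i * y j = 0 := by
  rw [mul_comm]
  exact hΛ.transpose.mul_eq_zero_of_right_eq_zero hu j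

theorem row_mem_signSet (hΛ : IsCriticalMultiplier u v x y Λ) {i : ι} {α : ℝ}
    (hx : x i = α * u i) (j : κ) : Λ i j ∈ signSet (u i * (α * y j - v j)) := by
  convert hΛ.mem_signSet i j using 2
  rw [hx]; ring

end IsCriticalMultiplier

end Objective

section LocalMin

variable {ι κ : Type*} [Fintype ι] [Fintype κ]

theorem sum_abs_mul_add_le_sum_abs_mul_sub (μ δ : ℝ) (v q : κ → ℝ) :
    ∑ j, |μ * v j| + |δ| * (subgradRadius v q 0 - |subgradCenter v q 0|)
      ≤ ∑ j, |δ * q j - μ * v j| := by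
  have hterm : ∀ j, |μ * v j| + (if 0 * q j = v j then |δ| * |q j| else 0)
      + Real.sign μ * δ * (Real.sign (0 * q j - v j) * q j) ≤ |δ * q j - μ * v j| := by
    intro j
    split_ifs with hj
    · simp [← hj, abs_mul]
    · have h1 := Real.sign_mul_le_abs (μ * v j) (μ * v j - δ * q j)
      have h2 := Real.sign_mul_self (μ * v j)
      rw [Real.sign_mul, abs_sub_comm] at h1
      rw [Real.sign_mul] at h2
      rw [zero_mul, zero_sub, Real.sign_neg]
      linarith
  have hC := neg_abs_le (Real.sign μ * δ * subgradCenter v q 0)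
  rw [abs_mul, abs_mul] at hC
  have hμ := mul_le_of_le_one_left (mul_nonneg (abs_nonneg δ) (abs_nonneg (subgradCenter v q 0)))
    (Real.abs_sign_le_one μ)
  calc ∑ j, |μ * v j| + |δ| * (subgradRadius v q 0 - |subgradCenter v q 0|)
      ≤ ∑ j, |μ * v j| + |δ| * subgradRadius v q 0
          + Real.sign μ * δ * subgradCenter v q 0 := by linarith
    _ = ∑ j, (|μ * v j| + (if 0 * q j = v j then |δ| * |q j| else 0)
          + Real.sign μ * δ * (Real.sign (0 * q j - v j) * q j)) := by
        simp only [subgradRadius, subgradCenter, sum_filter, sum_add_distrib, mul_sum, mul_ite,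
          mul_zero]
    _ ≤ ∑ j, |δ * q j - μ * v j| := sum_le_sum fun j _ => hterm j

theorem isLocalMin_objective_zero_left (u : ι → ℝ) {v y : κ → ℝ}
    (h : |subgradCenter v y 0| < subgradRadius v y 0) :
    IsLocalMin (objective u v) (0, y) := by
  have hR : Continuous fun q : κ → ℝ => subgradRadius v q 0 := by
    simp only [subgradRadius, zero_mul, sum_filter]
    exact continuous_finsetSum _ fun j _ => by by_cases hj : 0 = v j <;> simp [hj] <;> fun_prop
  have hC : Continuous fun q : κ → ℝ => |subgradCenter v q 0| := by
    simp only [subgradCenter, zero_mul, zero_sub]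
    fun_prop
  have hev : ∀ᶠ p in 𝓝 ((0 : ι → ℝ), y), |subgradCenter v p.2 0| < subgradRadius v p.2 0 :=
    (hC.comp continuous_snd).continuousAt.eventually_lt (hR.comp continuous_snd).continuousAt h
  filter_upwards [hev] with p hp
  calc objective u v (0, y) = ∑ i, ∑ j, |u i * v j| := by simp [objective]
    _ ≤ ∑ i, (∑ j, |u i * v j|
          + |p.1 i| * (subgradRadius v p.2 0 - |subgradCenter v p.2 0|)) :=
        sum_le_sum fun i _ =>
          le_add_of_nonneg_right (mul_nonneg (abs_nonneg _) (sub_nonneg.2 hp.le))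
    _ ≤ objective u v p := sum_le_sum fun i _ => sum_abs_mul_add_le_sum_abs_mul_sub _ _ v p.2

end LocalMin

section Descent

variable {ι κ : Type*} [Fintype ι] [Fintype κ]
  {u : ι → ℝ} {v : κ → ℝ} {x : ι → ℝ} {y : κ → ℝ} {Λ : Matrix ι κ ℝ}

namespace IsCriticalMultiplier

theorem eventually_objective_lt (hΛ : IsCriticalMultiplier u v x y Λ) {θ : ℝ} (hθ : θ ≠ 0)
    (hal : IsAligned u v x y Λ θ) (hF : 0 < objective u v (x, y)) :
    ∀ᶠ t : ℝ in 𝓝[>] 0, objective u v ((1 - t) • x + t • (θ • u), (1 - t) • y + t • (θ⁻¹ • v))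
      < objective u v (x, y) := by
  have hent : ∀ᶠ t in 𝓝[>] (0 : ℝ), ∀ i j,
      Λ i j * ((1 - t) ^ 2 * (x i * y j - u i * v j) + t * (1 - t) * pathCoeff u v x y θ i j)
        = |(1 - t) ^ 2 * (x i * y j - u i * v j) + t * (1 - t) * pathCoeff u v x y θ i j| := by
    simp only [eventually_all]
    exact fun i j => eventually_mul_eq_abs_of_mem_signSet (hΛ.mem_signSet i j) (hal i j)
  filter_upwards [hent, Ioo_mem_nhdsGT one_pos] with t ht ⟨ht0, ht1⟩
  calc objective u v ((1 - t) • x + t • (θ • u), (1 - t) • y + t • (θ⁻¹ • v))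
      = ∑ i, ∑ j, Λ i j * ((1 - t) ^ 2 * (x i * y j - u i * v j)
          + t * (1 - t) * pathCoeff u v x y θ i j) := by
        simp only [objective, path_mul_sub_eq hθ, ← ht]
    _ = (1 - t) ^ 2 * objective u v (x, y) + t * (1 - t) * (2 * objective u v (x, y)) := by
        simp only [mul_add, sum_add_distrib, mul_left_comm (Λ _ _), ← mul_sum,
          hΛ.sum_sum_mul_eq_objective, hΛ.sum_sum_mul_pathCoeff]
    _ < objective u v (x, y) := by nlinarith [mul_pos (mul_pos ht0 ht0) hF]

theorem subgradRadius_zero_le_abs_subgradCenter (hΛ : IsCriticalMultiplier u v x y Λ)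
    (hmin : ¬IsLocalMin (objective u v) (x, y)) :
    subgradRadius v y 0 ≤ |subgradCenter v y 0| := by
  refine not_lt.1 fun hlt => hmin ?_
  obtain ⟨j, hj, hyj⟩ := exists_ne_zero_of_sum_ne_zero (hlt.trans_le' (abs_nonneg _)).ne'
  rw [mem_filter, zero_mul, eq_comm] at hj
  have hx : x = 0 := funext fun i =>
    (mul_eq_zero.1 (hΛ.mul_eq_zero_of_right_eq_zero hj.2 i)).resolve_right (abs_ne_zero.1 hyj)
  rw [hx]
  exact isLocalMin_objective_zero_left u hlt

theorem mul_pathCoeff_eq_abs (hΛ : IsCriticalMultiplier u v x y Λ) {θ α : ℝ} (hθ : θ ≠ 0)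
    {i : ι} (hui : u i ≠ 0) (hx : x i = α * u i)
    (hα : α = θ ∨ subgradCenter v y α = -(Real.sign θ * subgradRadius v y α)) {j : κ}
    (hc : x i * y j - u i * v j = 0) :
    Λ i j * pathCoeff u v x y θ i j = |pathCoeff u v x y θ i j| := by
  have hv : α * y j = v j := by
    have : u i * (α * y j - v j) = 0 := by rw [← hc, hx]; ring
    exact sub_eq_zero.1 ((mul_eq_zero.1 this).resolve_left hui)
  have hcoeff : pathCoeff u v x y θ i j = u i * y j * ((θ - α) ^ 2 * θ⁻¹) := by
    rw [pathCoeff, hx, ← hv]; field_simp; ring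
  rcases hα with hαθ | hC
  · simp [hcoeff, hαθ]
  have hs := sign_mul_mul_eq_abs_of_subgradCenter_eq hui (hΛ.row_mem_signSet hx)
    (hΛ.sum_mul_right i) hθ hC hv
  have hk : Real.sign θ * ((θ - α) ^ 2 * θ⁻¹) = |(θ - α) ^ 2 * θ⁻¹| := by
    rw [abs_mul, abs_of_nonneg (sq_nonneg _), ← Real.sign_mul_self θ⁻¹, Real.sign_inv]; ring
  calc Λ i j * pathCoeff u v x y θ i j
      = Real.sign θ * (Λ i j * (u i * y j)) * (Real.sign θ * ((θ - α) ^ 2 * θ⁻¹)) := by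
        rw [hcoeff]
        linear_combination
          (-(Λ i j * (u i * y j) * ((θ - α) ^ 2 * θ⁻¹))) * Real.sign_mul_sign_of_ne_zero hθ
    _ = |pathCoeff u v x y θ i j| := by rw [hs, hk, hcoeff, abs_mul (u i * y j)]

theorem exists_isAligned_of_left (hΛ : IsCriticalMultiplier u v x y Λ)
    (hux : ∀ i, u i = 0 → x i = 0) (hmin : ¬IsLocalMin (objective u v) (x, y)) :
    ∃ θ ≠ 0, IsAligned u v x y Λ θ := by
  set S : Set ℝ := {α | ∃ i, u i ≠ 0 ∧ x i = α * u i}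
  have hS : ∀ α ∈ S, |subgradCenter v y α| ≤ subgradRadius v y α := by
    rintro α ⟨i, hui, hx⟩
    exact abs_subgradCenter_le_subgradRadius hui (hΛ.row_mem_signSet hx) (hΛ.sum_mul_right i)
  obtain ⟨θ, hθ, hθS⟩ := exists_forall_eq_or_subgradCenter_eq S hS fun h0S =>
    (hS 0 h0S).antisymm (hΛ.subgradRadius_zero_le_abs_subgradCenter hmin)
  refine ⟨θ, hθ, fun i j hc => ?_⟩
  by_cases hui : u i = 0
  · simp [pathCoeff, hui, hux i hui]
  have hx : x i = x i / u i * u i := (div_mul_cancel₀ _ hui).symm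
  exact hΛ.mul_pathCoeff_eq_abs hθ hui hx (hθS _ ⟨i, hui, hx⟩) hc

theorem exists_isAligned (hΛ : IsCriticalMultiplier u v x y Λ)
    (hmin : ¬IsLocalMin (objective u v) (x, y)) : ∃ θ ≠ 0, IsAligned u v x y Λ θ := by
  by_cases hux : ∀ i, u i = 0 → x i = 0
  · exact hΛ.exists_isAligned_of_left hux hmin
  push Not at hux
  obtain ⟨i, hui, hxi⟩ := hux
  have hvy : ∀ j, v j = 0 → y j = 0 := fun j _ =>
    (mul_eq_zero.1 (hΛ.mul_eq_zero_of_left_eq_zero hui j)).resolve_left hxi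
  obtain ⟨θ, hθ, hal⟩ :=
    hΛ.transpose.exists_isAligned_of_left hvy fun h => hmin h.of_objective_swap
  exact ⟨θ⁻¹, inv_ne_zero hθ, hal.of_transpose⟩

end IsCriticalMultiplier

end Descent

theorem saddle_point_descent_direction_general (m n : ℕ)
    (u : Fin m → ℝ) (v : Fin n → ℝ)
    (x : Fin m → ℝ) (y : Fin n → ℝ)
    (hcrit : ∃ Λ : Matrix (Fin m) (Fin n) ℝ,
      (∀ i j, Λ i j ∈ signSet (x i * y j - u i * v j)) ∧
      (∀ i, ∑ j, Λ i j * y j = 0) ∧ (∀ j, ∑ i, Λ i j * x i = 0))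
    (hnotmin : ¬ IsLocalMin (fun q : (Fin m → ℝ) × (Fin n → ℝ) =>
      ∑ i, ∑ j, |q.1 i * q.2 j - u i * v j|) (x, y)) :
    ∃ θ : ℝ, θ ≠ 0 ∧ ∃ ε > (0:ℝ), ∀ t ∈ Set.Ioo (0:ℝ) ε,
      (∑ i, ∑ j, |((1 - t) • x + t • (θ • u)) i * ((1 - t) • y + t • (θ⁻¹ • v)) j
          - u i * v j|)
        < ∑ i, ∑ j, |x i * y j - u i * v j| := by
  obtain ⟨Λ, hmem, hrow, hcol⟩ := hcrit
  have hΛ : IsCriticalMultiplier u v x y Λ := ⟨hmem, hrow, hcol⟩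
  obtain ⟨θ, hθ, hal⟩ := hΛ.exists_isAligned hnotmin
  obtain ⟨ε, hε, hsub⟩ := mem_nhdsGT_iff_exists_Ioo_subset.1
    (hΛ.eventually_objective_lt hθ hal (objective_pos_of_not_isLocalMin hnotmin))
  exact ⟨θ, hθ, ε, hε, fun t ht => hsub ht⟩

/-- If `u ≠ 0` and `v ≠ 0`, then every saddle point `(x,y)` of
`f(x,y) = Σᵢ Σⱼ |xᵢ yⱼ − uᵢ vⱼ|` admits a direction of descent pointing toward a global
minimum `(θu, v/θ)`: there are `θ ≠ 0` and `ε > 0` with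
`f((1−t)(x,y) + t(θu, v/θ)) < f(x,y)` for all `t ∈ (0, ε)`. -/
theorem saddle_point_descent_direction (m n : ℕ) (hm : 1 ≤ m) (hn : 1 ≤ n)
    (u : Fin m → ℝ) (v : Fin n → ℝ) (hu : u ≠ 0) (hv : v ≠ 0)
    (x : Fin m → ℝ) (y : Fin n → ℝ)
    (hcrit : ∃ Λ : Matrix (Fin m) (Fin n) ℝ,
      (∀ i j, Λ i j ∈ signSet (x i * y j - u i * v j)) ∧
      (∀ i, ∑ j, Λ i j * y j = 0) ∧ (∀ j, ∑ i, Λ i j * x i = 0))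
    (hnotmin : ¬ IsLocalMin (fun q : (Fin m → ℝ) × (Fin n → ℝ) =>
      ∑ i, ∑ j, |q.1 i * q.2 j - u i * v j|) (x, y)) :
    ∃ θ : ℝ, θ ≠ 0 ∧ ∃ ε > (0:ℝ), ∀ t ∈ Set.Ioo (0:ℝ) ε,
      (∑ i, ∑ j, |((1 - t) • x + t • (θ • u)) i * ((1 - t) • y + t • (θ⁻¹ • v)) j
          - u i * v j|)
        < ∑ i, ∑ j, |x i * y j - u i * v j| :=
  saddle_point_descent_direction_general m n u v x y hcrit hnotmin
end

section
/- Let x, h ∈ ℝ^m and k ∈ ℝ^n be such that |(x_i + h_i) k_j| < |u_i v_j| for all indices i, j with u_i v_j ≠ 0. Then f(x + h, k) ≥ f(x, 0) + Σ_{j : v_j ≠ 0} |k_j| · ( Σ_{i : u_i = 0} |x_i + h_i| − |Σ_{i : u_i ≠ 0} sgn(u_i)(x_i + h_i)| ), where f(x,0) = Σ_{i,j} |u_i v_j|. -/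
open scoped Classical

lemma sign_mul_aux (a b : ℝ) (ha : a ≠ 0) (hb : b ≠ 0) :
    Real.sign (a * b) = Real.sign a * Real.sign b := by
  rcases ha.lt_or_gt with h|h <;> rcases hb.lt_or_gt with h'|h' <;>
    simp [Real.sign_of_pos, Real.sign_of_neg, h, h', mul_pos, mul_pos_of_neg_of_neg,
      mul_neg_of_pos_of_neg, mul_neg_of_neg_of_pos]

lemma abs_sign_aux (a : ℝ) (ha : a ≠ 0) : |Real.sign a| = 1 := by
  rcases ha.lt_or_gt with h|h <;> simp [Real.sign_of_pos, Real.sign_of_neg, h]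

lemma abs_sub_of_abs_lt_aux (a b : ℝ) (hb : |a| < |b|) :
    |a - b| = |b| - Real.sign b * a := by
  obtain ⟨h1, h2⟩ := abs_lt.mp hb
  rcases lt_trichotomy b 0 with h|h|h
  · rw [Real.sign_of_neg h, abs_of_neg h] at *
    rw [abs_of_nonneg (by linarith)]; ring
  · simp [h] at hb; linarith [abs_nonneg a]
  · rw [Real.sign_of_pos h, abs_of_pos h] at *
    rw [abs_of_nonpos (by linarith)]; ring

/-- If `|(xᵢ + hᵢ) kⱼ| < |uᵢ vⱼ|` whenever `uᵢ vⱼ ≠ 0`, then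
`f(x+h, k) ≥ f(x,0) + Σ_{vⱼ≠0} |kⱼ| (Σ_{uᵢ=0} |xᵢ+hᵢ| − |Σ_{uᵢ≠0} sgn(uᵢ)(xᵢ+hᵢ)|)`,
where `f(x,0) = Σᵢⱼ |uᵢ vⱼ|`. -/
theorem lower_bound_near_y_zero (m n : ℕ) (hm : 1 ≤ m) (hn : 1 ≤ n)
    (u x h : Fin m → ℝ) (v k : Fin n → ℝ)
    (hsmall : ∀ i j, u i * v j ≠ 0 → |(x i + h i) * k j| < |u i * v j|) :
    (∑ i, ∑ j, |(x i + h i) * k j - u i * v j|) ≥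
      (∑ i, ∑ j, |x i * (0:ℝ) - u i * v j|) +
        ∑ j ∈ Finset.univ.filter (fun j => v j ≠ 0), |k j| *
          ((∑ i ∈ Finset.univ.filter (fun i => u i = 0), |x i + h i|) -
            |∑ i ∈ Finset.univ.filter (fun i => u i ≠ 0), Real.sign (u i) * (x i + h i)|)
    ∧ (∑ i, ∑ j, |x i * (0:ℝ) - u i * v j|) = ∑ i, ∑ j, |u i * v j| := by
  have hzero : (∑ i, ∑ j, |x i * (0:ℝ) - u i * v j|) = ∑ i, ∑ j, |u i * v j| := by
    refine Finset.sum_congr rfl fun i _ => Finset.sum_congr rfl fun j _ => ?_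
    rw [mul_zero, zero_sub, abs_neg]
  refine ⟨?_, hzero⟩
  rw [hzero]
  set A := Finset.univ.filter (fun i => u i = 0) with hA
  set B := Finset.univ.filter (fun i => u i ≠ 0) with hB
  set S := ∑ i ∈ B, Real.sign (u i) * (x i + h i) with hS
  set T := (∑ i ∈ A, |x i + h i|) - |S| with hT
  have key : ∀ j : Fin n, (∑ i, |(x i + h i) * k j - u i * v j|) ≥
      (∑ i, |u i * v j|) + (if v j ≠ 0 then |k j| * T else 0) := by
    intro j
    by_cases hv : v j = 0
    · simp only [hv, if_neg (not_not.mpr rfl), add_zero, mul_zero, sub_zero, abs_zero]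
      rw [Finset.sum_const_zero]
      exact Finset.sum_nonneg fun i _ => abs_nonneg _
    · rw [if_pos hv]
      have hsplit : ∀ g : Fin m → ℝ, (∑ i, g i) = (∑ i ∈ A, g i) + ∑ i ∈ B, g i := by
        intro g
        rw [hA, hB, Finset.sum_filter_add_sum_filter_not]
      rw [hsplit, hsplit fun i => |u i * v j|]
      have hAterm : ∀ i ∈ A, |(x i + h i) * k j - u i * v j| = |x i + h i| * |k j| := by
        intro i hi
        have hu : u i = 0 := (Finset.mem_filter.mp hi).2
        rw [hu, zero_mul, sub_zero, abs_mul]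
      have hAzero : ∀ i ∈ A, |u i * v j| = 0 := by
        intro i hi
        have hu : u i = 0 := (Finset.mem_filter.mp hi).2
        simp [hu]
      have hBterm : ∀ i ∈ B, |(x i + h i) * k j - u i * v j| =
          |u i * v j| - (Real.sign (v j) * k j) * (Real.sign (u i) * (x i + h i)) := by
        intro i hi
        have hu : u i ≠ 0 := (Finset.mem_filter.mp hi).2
        have huv : u i * v j ≠ 0 := mul_ne_zero hu hv
        rw [abs_sub_of_abs_lt_aux _ _ (hsmall i j huv), sign_mul_aux _ _ hu hv]
        ring
      rw [Finset.sum_congr rfl hAterm, Finset.sum_congr rfl hBterm,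
        Finset.sum_congr rfl hAzero, Finset.sum_sub_distrib, ← Finset.mul_sum, ← hS,
        Finset.sum_const_zero, ← Finset.sum_mul]
      have hle : (Real.sign (v j) * k j) * S ≤ |k j| * |S| := by
        calc (Real.sign (v j) * k j) * S ≤ |(Real.sign (v j) * k j) * S| := le_abs_self _
        _ = |k j| * |S| := by rw [abs_mul, abs_mul, abs_sign_aux _ hv, one_mul]
      rw [hT]
      nlinarith [hle]
  calc (∑ i, ∑ j, |(x i + h i) * k j - u i * v j|)
      = ∑ j, ∑ i, |(x i + h i) * k j - u i * v j| := Finset.sum_comm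
    _ ≥ ∑ j, ((∑ i, |u i * v j|) + (if v j ≠ 0 then |k j| * T else 0)) :=
        Finset.sum_le_sum fun j _ => key j
    _ = (∑ j, ∑ i, |u i * v j|) + ∑ j, (if v j ≠ 0 then |k j| * T else 0) :=
        Finset.sum_add_distrib
    _ = (∑ i, ∑ j, |u i * v j|) +
        ∑ j ∈ Finset.univ.filter (fun j => v j ≠ 0), |k j| * T := by
        rw [Finset.sum_comm, Finset.sum_filter]
end

section
/- Let x ∈ ℝ^m and set s := Σ_{i : u_i ≠ 0} sgn(u_i) x_i. Assume |s| = Σ_{i : u_i = 0} |x_i| and s ≠ 0, and let θ ≠ 0 have the same sign as s. Then there exists ε > 0 such that for all t ∈ (0, ε), f((1−t)x + tθu, t v/θ) = (1 − t²) · f(x, 0). -/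
open scoped Classical

/-- If `s := Σ_{uᵢ≠0} sgn(uᵢ) xᵢ` satisfies `|s| = Σ_{uᵢ=0} |xᵢ|` and
`s ≠ 0`, and `θ ≠ 0` has the same sign as `s`, then for all sufficiently small `t > 0`,
`f((1−t)x + tθu, t v/θ) = (1 − t²) f(x, 0)`. -/
theorem descent_from_boundary_saddle (m n : ℕ) (hm : 1 ≤ m) (hn : 1 ≤ n)
    (u x : Fin m → ℝ) (v : Fin n → ℝ) (θ : ℝ) (hθ : θ ≠ 0)
    (hs : |∑ i ∈ Finset.univ.filter (fun i => u i ≠ 0), Real.sign (u i) * x i|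
        = ∑ i ∈ Finset.univ.filter (fun i => u i = 0), |x i|)
    (hs0 : (∑ i ∈ Finset.univ.filter (fun i => u i ≠ 0), Real.sign (u i) * x i) ≠ 0)
    (hsign : Real.sign θ =
      Real.sign (∑ i ∈ Finset.univ.filter (fun i => u i ≠ 0), Real.sign (u i) * x i)) :
    ∃ ε > (0:ℝ), ∀ t ∈ Set.Ioo (0:ℝ) ε,
      (∑ i, ∑ j, |((1 - t) • x + (t * θ) • u) i * ((t / θ) • v) j - u i * v j|) =
        (1 - t ^ 2) * ∑ i, ∑ j, |x i * (0:ℝ) - u i * v j| := by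
  classical
  set S := Finset.univ.filter (fun i => u i ≠ 0) with hSdef
  set s := ∑ i ∈ S, Real.sign (u i) * x i with hsdef
  have hSne : S.Nonempty := by
    by_contra h
    rw [Finset.not_nonempty_iff_eq_empty] at h
    apply hs0
    rw [hsdef, h, Finset.sum_empty]
  set ε := min (1/2) (S.inf' hSne (fun i => |θ| * |u i| / (2 * (|x i| + 1)))) with hεdef
  have hθpos : 0 < |θ| := abs_pos.mpr hθ
  have hεpos : 0 < ε := by
    apply lt_min (by norm_num)
    rw [Finset.lt_inf'_iff]
    intro i hi
    have hui : u i ≠ 0 := (Finset.mem_filter.mp hi).2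
    have : 0 < |u i| := abs_pos.mpr hui
    positivity
  refine ⟨ε, hεpos, ?_⟩
  intro t ht
  obtain ⟨ht0, htε⟩ := ht
  have ht12 : t < 1/2 := lt_of_lt_of_le htε (min_le_left _ _)
  have hβ : (0:ℝ) < 1 - t ^ 2 := by nlinarith
  set α := t * (1 - t) / θ with hαdef
  -- bound: for i ∈ S, |α| * |x i| ≤ (1 - t^2) * |u i|
  have hbound : ∀ i ∈ S, |α| * |x i| ≤ (1 - t ^ 2) * |u i| := by
    intro i hi
    have hui : (0:ℝ) < |u i| := abs_pos.mpr (Finset.mem_filter.mp hi).2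
    have h1 : t ≤ |θ| * |u i| / (2 * (|x i| + 1)) :=
      le_of_lt (lt_of_lt_of_le htε ((min_le_right _ _).trans (Finset.inf'_le _ hi)))
    have h1' : t * (2 * (|x i| + 1)) ≤ |θ| * |u i| := by
      rw [← le_div_iff₀ (by positivity)]; exact h1
    have hαabs : |α| = t * (1 - t) / |θ| := by
      rw [hαdef, abs_div, abs_of_pos (by nlinarith : (0:ℝ) < t * (1 - t))]
    rw [hαabs, div_mul_eq_mul_div, div_le_iff₀ hθpos]
    have hx : (0:ℝ) ≤ |x i| := abs_nonneg _
    nlinarith [mul_le_mul_of_nonneg_left h1' hβ.le, mul_nonneg ht0.le hx,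
      mul_pos ht0 hβ, mul_nonneg (mul_nonneg ht0.le ht0.le) hx]
  -- per-term identity on S
  have hterm : ∀ i ∈ S, |α * x i - (1 - t ^ 2) * u i|
      = (1 - t ^ 2) * |u i| - α * (Real.sign (u i) * x i) := by
    intro i hi
    have hui : u i ≠ 0 := (Finset.mem_filter.mp hi).2
    have hb := hbound i hi
    have hax : |α * x i| ≤ (1 - t ^ 2) * |u i| := by rw [abs_mul]; exact hb
    rcases hui.lt_or_gt with h | h
    · rw [Real.sign_of_neg h]
      have habs : |u i| = -u i := abs_of_neg h
      rw [habs] at hax ⊢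
      have h3 : -|α * x i| ≤ α * x i := neg_abs_le _
      rw [abs_of_nonneg (by linarith)]
      ring
    · rw [Real.sign_of_pos h]
      have habs : |u i| = u i := abs_of_pos h
      rw [habs] at hax ⊢
      have h2 : α * x i ≤ |α * x i| := le_abs_self _
      rw [abs_of_nonpos (by linarith)]
      ring
  -- α * s = |α| * |s|
  have hαs : α * s = |α| * |s| := by
    have htt : (0:ℝ) < t * (1 - t) := by nlinarith
    rcases hs0.lt_or_gt with h | h
    · have hθneg : θ < 0 := by
        rcases hθ.lt_or_gt with h' | h'
        · exact h'
        · exfalso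
          rw [Real.sign_of_pos h', Real.sign_of_neg h] at hsign; norm_num at hsign
      have hαneg : α < 0 := div_neg_of_pos_of_neg htt hθneg
      rw [abs_of_neg hαneg, abs_of_neg h]; ring
    · have hθpos' : 0 < θ := by
        rcases hθ.lt_or_gt with h' | h'
        · exfalso
          rw [Real.sign_of_neg h', Real.sign_of_pos h] at hsign; norm_num at hsign
        · exact h'
      have hαpos : 0 < α := div_pos htt hθpos'
      rw [abs_of_pos hαpos, abs_of_pos h]
  -- the key one-dimensional sum identity
  have hkey : ∑ i, |α * x i - (1 - t ^ 2) * u i| = (1 - t ^ 2) * ∑ i, |u i| := by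
    have hsplit : ∀ (f : Fin m → ℝ), ∑ i, f i = ∑ i ∈ S, f i
        + ∑ i ∈ Finset.univ.filter (fun i => u i = 0), f i := by
      intro f
      rw [hSdef, ← Finset.sum_filter_add_sum_filter_not Finset.univ (fun i => u i ≠ 0) f]
      congr 1
      apply Finset.sum_congr _ (fun _ _ => rfl)
      ext i; simp [not_not]
    rw [hsplit, hsplit (fun i => |u i|)]
    have hT0 : ∑ i ∈ Finset.univ.filter (fun i => u i = 0), |u i| = 0 := by
      apply Finset.sum_eq_zero
      intro i hi
      rw [(Finset.mem_filter.mp hi).2, abs_zero]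
    have hTsum : ∑ i ∈ Finset.univ.filter (fun i => u i = 0),
        |α * x i - (1 - t ^ 2) * u i| = |α| * |s| := by
      rw [hs, Finset.mul_sum]
      apply Finset.sum_congr rfl
      intro i hi
      rw [(Finset.mem_filter.mp hi).2, mul_zero, sub_zero, abs_mul]
    have hSsum : ∑ i ∈ S, |α * x i - (1 - t ^ 2) * u i|
        = (1 - t ^ 2) * ∑ i ∈ S, |u i| - α * s := by
      rw [Finset.sum_congr rfl hterm, Finset.sum_sub_distrib, ← Finset.mul_sum,
        ← Finset.mul_sum, ← hsdef]
    rw [hSsum, hTsum, ← hαs, hT0]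
    ring
  -- now the main computation
  have hLHS : ∀ i, ∀ j, ((1 - t) • x + (t * θ) • u) i * ((t / θ) • v) j - u i * v j
      = (α * x i - (1 - t ^ 2) * u i) * v j := by
    intro i j
    simp only [Pi.add_apply, Pi.smul_apply, smul_eq_mul]
    rw [hαdef]
    field_simp
    ring
  calc ∑ i, ∑ j, |((1 - t) • x + (t * θ) • u) i * ((t / θ) • v) j - u i * v j|
      = ∑ i, ∑ j, |α * x i - (1 - t ^ 2) * u i| * |v j| := by
        apply Finset.sum_congr rfl; intro i _
        apply Finset.sum_congr rfl; intro j _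
        rw [hLHS i j, abs_mul]
    _ = (∑ i, |α * x i - (1 - t ^ 2) * u i|) * ∑ j, |v j| := by
        rw [Finset.sum_mul]
        apply Finset.sum_congr rfl; intro i _
        rw [Finset.mul_sum]
    _ = (1 - t ^ 2) * ((∑ i, |u i|) * ∑ j, |v j|) := by rw [hkey]; ring
    _ = (1 - t ^ 2) * ∑ i, ∑ j, |x i * (0:ℝ) - u i * v j| := by
        congr 1
        rw [Finset.sum_mul]
        apply Finset.sum_congr rfl; intro i _
        rw [Finset.mul_sum]
        apply Finset.sum_congr rfl; intro j _
        rw [mul_zero, zero_sub, abs_neg, abs_mul]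
end

section
/- Let (x,y) ∈ ℝ^m × ℝ^n satisfy x_i y_j / (u_i v_j) ≤ 1 for all indices i, j with u_i v_j ≠ 0, x_i = 0 whenever u_i = 0, and y_j = 0 whenever v_j = 0. Then there exist θ ≠ 0 and ε > 0 such that for all t ∈ (0, ε) and all i, j with u_i v_j ≠ 0, ((1−t)·x_i/u_i + tθ) · ((1−t)·y_j/v_j + t/θ) ≤ 1. -/
open scoped Classical

/-- Per-pair key algebraic step. -/
lemma pair_bound_aux (A B θ t : ℝ) (hθ : θ ≠ 0) (ht1 : t ≤ 1)
    (h : (1 - t) * (A * B - 1) + t * (A / θ + B * θ - 2) ≤ 0) :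
    ((1 - t) * A + t * θ) * ((1 - t) * B + t / θ) ≤ 1 := by
  have key : ((1 - t) * A + t * θ) * ((1 - t) * B + t / θ) - 1
      = (1 - t) * ((1 - t) * (A * B - 1) + t * (A / θ + B * θ - 2)) := by
    field_simp
    ring
  nlinarith [mul_nonpos_of_nonneg_of_nonpos (by linarith : (0:ℝ) ≤ 1 - t) h]

/-- Same-sign tight values coincide. -/
lemma tight_eq_aux {m n : ℕ} (A : Fin m → ℝ) (B : Fin n → ℝ)
    (hab : ∀ i j, A i * B j ≤ 1)
    {i k : Fin m} {j l : Fin n} (hij : A i * B j = 1) (hkl : A k * B l = 1)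
    (hpos : 0 < A i * A k) : A i = A k := by
  set p := A i * B l with hp
  set q := A k * B j with hq
  have h1 : p ≤ 1 := hab i l
  have h2 : q ≤ 1 := hab k j
  have hpk : p * A k = A i := by
    have : p * A k = A i * (A k * B l) := by ring
    rw [this, hkl]; ring
  have hqi : q * A i = A k := by
    have : q * A i = A k * (A i * B j) := by ring
    rw [this, hij]; ring
  have hAi : A i ≠ 0 := by
    rintro h; rw [h, zero_mul] at hij; norm_num at hij
  have hAk : A k ≠ 0 := by
    rintro h; rw [h, zero_mul] at hkl; norm_num at hkl
  have hAi2 : 0 < A i * A i := mul_self_pos.mpr hAi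
  have hAk2 : 0 < A k * A k := mul_self_pos.mpr hAk
  have hpq : p * q = 1 := by
    have hik : A i * A k ≠ 0 := ne_of_gt hpos
    have h3 : (p * q) * (A i * A k) = A i * A k := by
      calc (p * q) * (A i * A k) = (p * A k) * (q * A i) := by ring
        _ = A i * A k := by rw [hpk, hqi]
    have h4 : (p * q) * (A i * A k) = 1 * (A i * A k) := by rw [h3, one_mul]
    exact mul_right_cancel₀ hik h4
  have hpA : p * (A i * A k) = A i * A i := by linear_combination A i * hpk
  have hqA : q * (A i * A k) = A k * A k := by linear_combination A k * hqi
  have hp0 : 0 < p := by nlinarith [hpA, hAi2, hpos]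
  have hq0 : 0 < q := by nlinarith [hqA, hAk2, hpos]
  have hp1 : p = 1 := by nlinarith
  rw [← hpk, hp1, one_mul]

/-- The main auxiliary lemma: all inequalities `A i * B j ≤ 1` are preserved. -/
lemma main_aux (m n : ℕ) (hm : 1 ≤ m) (hn : 1 ≤ n) (A : Fin m → ℝ) (B : Fin n → ℝ)
    (hab : ∀ i j, A i * B j ≤ 1) :
    ∃ θ : ℝ, θ ≠ 0 ∧ ∃ ε > (0:ℝ), ∀ t ∈ Set.Ioo (0:ℝ) ε, ∀ i j,
      ((1 - t) * A i + t * θ) * ((1 - t) * B j + t / θ) ≤ 1 := by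
  -- choose θ
  have hθex : ∃ θ : ℝ, θ ≠ 0 ∧ ∀ i j, A i * B j = 1 → A i / θ + B j * θ ≤ 2 := by
    by_cases hpos : ∃ i j, A i * B j = 1 ∧ 0 < A i
    · obtain ⟨i0, j0, h0, h0pos⟩ := hpos
      refine ⟨A i0, ne_of_gt h0pos, ?_⟩
      intro k l hkl
      have hak : A k ≠ 0 := by
        rintro h; rw [h, zero_mul] at hkl; norm_num at hkl
      rcases hak.lt_or_gt with hneg | hposk
      · -- A k < 0 : both terms negative
        have hbl : B l * A k = 1 := by linarith [hkl, mul_comm (A k) (B l)]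
        have hbl_neg : B l < 0 := by nlinarith
        have t1 : A k / A i0 < 0 := div_neg_of_neg_of_pos hneg h0pos
        nlinarith [mul_neg_of_neg_of_pos hbl_neg h0pos]
      · have heq : A k = A i0 := tight_eq_aux A B hab hkl h0 (mul_pos hposk h0pos)
        rw [heq, div_self (ne_of_gt h0pos)]
        have hbl : B l * A i0 = 1 := by rw [← heq]; linarith [mul_comm (A k) (B l), hkl]
        linarith
    · by_cases hneg : ∃ i j, A i * B j = 1
      · obtain ⟨i0, j0, h0⟩ := hneg
        have h0ne : A i0 ≠ 0 := by
          rintro h; rw [h, zero_mul] at h0; norm_num at h0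
        have h0neg : A i0 < 0 := by
          rcases h0ne.lt_or_gt with h | h
          · exact h
          · exact absurd ⟨i0, j0, h0, h⟩ hpos
        refine ⟨A i0, ne_of_lt h0neg, ?_⟩
        intro k l hkl
        have hkne : A k ≠ 0 := by
          rintro h; rw [h, zero_mul] at hkl; norm_num at hkl
        have hkneg : A k < 0 := by
          rcases hkne.lt_or_gt with h | h
          · exact h
          · exact absurd ⟨k, l, hkl, h⟩ hpos
        have heq : A k = A i0 := tight_eq_aux A B hab hkl h0 (mul_pos_of_neg_of_neg hkneg h0neg)
        rw [heq, div_self (ne_of_lt h0neg)]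
        have hbl : B l * A i0 = 1 := by rw [← heq]; linarith [mul_comm (A k) (B l), hkl]
        linarith
      · exact ⟨1, one_ne_zero, fun i j h => absurd ⟨i, j, h⟩ hneg⟩
  obtain ⟨θ, hθ0, hθ⟩ := hθex
  refine ⟨θ, hθ0, ?_⟩
  set f : Fin m × Fin n → ℝ := fun p =>
    if A p.1 * B p.2 = 1 then 1
    else min (1/2) ((1 - A p.1 * B p.2) / (2 * (|A p.1 / θ + B p.2 * θ| + 2))) with hf
  have hfpos : ∀ p, 0 < f p := by
    intro p
    rw [hf]
    dsimp only
    split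
    · norm_num
    · rename_i h
      have h1 : A p.1 * B p.2 < 1 := lt_of_le_of_ne (hab _ _) h
      apply lt_min
      · norm_num
      · apply div_pos (by linarith) (by positivity)
  haveI : Nonempty (Fin m × Fin n) := ⟨(⟨0, hm⟩, ⟨0, hn⟩)⟩
  have hne : (Finset.univ : Finset (Fin m × Fin n)).Nonempty := Finset.univ_nonempty
  refine ⟨Finset.univ.inf' hne f, ?_, ?_⟩
  · exact (Finset.lt_inf'_iff hne).mpr fun p _ => hfpos p
  · intro t ht i j
    have htf : t < f (i, j) := lt_of_lt_of_le ht.2 (Finset.inf'_le f (Finset.mem_univ _))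
    have ht0 : 0 < t := ht.1
    by_cases htight : A i * B j = 1
    · have hc := hθ i j htight
      have hfij : f (i, j) = 1 := by rw [hf]; exact if_pos htight
      have ht1 : t < 1 := by rw [hfij] at htf; exact htf
      apply pair_bound_aux _ _ _ _ hθ0 ht1.le
      rw [htight]
      nlinarith
    · have hlt : A i * B j < 1 := lt_of_le_of_ne (hab i j) htight
      have hfij : f (i, j) = min (1/2) ((1 - A i * B j) / (2 * (|A i / θ + B j * θ| + 2))) := by
        rw [hf]; exact if_neg htight
      rw [hfij] at htf
      have ht2 : t < 1/2 := lt_of_lt_of_le htf (min_le_left _ _)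
      have ht3 : t < (1 - A i * B j) / (2 * (|A i / θ + B j * θ| + 2)) :=
        lt_of_lt_of_le htf (min_le_right _ _)
      apply pair_bound_aux _ _ _ _ hθ0 (by linarith)
      have habs1 : A i / θ + B j * θ ≤ |A i / θ + B j * θ| := le_abs_self _
      have habs0 : (0:ℝ) ≤ |A i / θ + B j * θ| := abs_nonneg _
      have ht3' : t * (2 * (|A i / θ + B j * θ| + 2)) < 1 - A i * B j := by
        rw [div_eq_mul_inv] at ht3
        have hpos2 : (0:ℝ) < 2 * (|A i / θ + B j * θ| + 2) := by positivity
        calc t * (2 * (|A i / θ + B j * θ| + 2))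
            < ((1 - A i * B j) * (2 * (|A i / θ + B j * θ| + 2))⁻¹) * (2 * (|A i / θ + B j * θ| + 2)) := by
              exact mul_lt_mul_of_pos_right ht3 hpos2
          _ = 1 - A i * B j := by field_simp
      nlinarith [habs1, habs0, ht3', hlt, ht2, ht0]

/-- If `xᵢ yⱼ/(uᵢ vⱼ) ≤ 1` whenever `uᵢ vⱼ ≠ 0`, `xᵢ = 0` whenever
`uᵢ = 0`, and `yⱼ = 0` whenever `vⱼ = 0`, then there exist `θ ≠ 0` and `ε > 0` such that
for all `t ∈ (0, ε)` and all `i, j` with `uᵢ vⱼ ≠ 0`,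
`((1−t) xᵢ/uᵢ + tθ)((1−t) yⱼ/vⱼ + t/θ) ≤ 1`. -/
theorem ratio_inequalities_preserved (m n : ℕ) (hm : 1 ≤ m) (hn : 1 ≤ n)
    (u x : Fin m → ℝ) (v y : Fin n → ℝ)
    (hratio : ∀ i j, u i * v j ≠ 0 → x i * y j / (u i * v j) ≤ 1)
    (hxu : ∀ i, u i = 0 → x i = 0)
    (hyv : ∀ j, v j = 0 → y j = 0) :
    ∃ θ : ℝ, θ ≠ 0 ∧ ∃ ε > (0:ℝ), ∀ t ∈ Set.Ioo (0:ℝ) ε, ∀ i j, u i * v j ≠ 0 →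
      ((1 - t) * (x i / u i) + t * θ) * ((1 - t) * (y j / v j) + t / θ) ≤ 1 := by
  have hab : ∀ i j, (x i / u i) * (y j / v j) ≤ 1 := by
    intro i j
    by_cases hu : u i = 0
    · simp [hu, hxu i hu]
    by_cases hv : v j = 0
    · simp [hv, hyv j hv]
    · have h := hratio i j (mul_ne_zero hu hv)
      rwa [← div_mul_div_comm] at h
  obtain ⟨θ, hθ0, ε, hε, hmain⟩ :=
    main_aux m n hm hn (fun i => x i / u i) (fun j => y j / v j) hab
  exact ⟨θ, hθ0, ε, hε, fun t ht i j _ => hmain t ht i j⟩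
end

section
/- Let 0 < μ < ν and let (x,y) ∈ ℝ^m × ℝ^n satisfy: x_i = 0 whenever u_i = 0; y_j = 0 whenever v_j = 0; for every i with u_i ≠ 0, x_i/u_i = μ or x_i/u_i = ν; for every j with v_j ≠ 0, y_j/v_j = 1/μ or y_j/v_j = 1/ν; and each of the four cases is attained: there exist i₀, i₁ with u_{i₀}, u_{i₁} ≠ 0, x_{i₀}/u_{i₀} = μ, x_{i₁}/u_{i₁} = ν, and j₀, j₁ with v_{j₀}, v_{j₁} ≠ 0, y_{j₀}/v_{j₀} = 1/ν, y_{j₁}/v_{j₁} = 1/μ. Define h ∈ ℝ^m by h_i = −u_i ν if u_i ≠ 0 and x_i/u_i = ν, and h_i = 0 otherwise; define k ∈ ℝ^n by k_j = v_j/ν if v_j ≠ 0 and y_j/v_j = 1/ν, and k_j = 0 otherwise. Then for every matrix Λ ∈ ℝ^{m×n} with Λ_{ij} ∈ sign(x_i y_j − u_i v_j) for all i,j, one has hᵀΛy + xᵀΛk = −(μ/ν)·Σ_{i: x_i/u_i = μ} Σ_{j: y_j/v_j = 1/ν} |u_i v_j| − (ν/μ)·Σ_{i: x_i/u_i = ν}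 Σ_{j: y_j/v_j = 1/μ} |u_i v_j| < 0. In particular, no such Λ satisfies Λy = 0 and Λᵀx = 0, so (x,y) is not a critical point of f. -/
open scoped Classical

lemma signSet_of_neg {t a : ℝ} (ht : t < 0) (ha : a ∈ signSet t) : a = -1 := by
  simp only [signSet, if_pos ht, Set.mem_singleton_iff] at ha; exact ha

lemma signSet_of_pos {t a : ℝ} (ht : 0 < t) (ha : a ∈ signSet t) : a = 1 := by
  simp only [signSet, if_neg (asymm ht), if_pos ht, Set.mem_singleton_iff] at ha; exact ha

lemma sum_sum_ite_filter {m n : ℕ} (u : Fin m → ℝ) (v : Fin n → ℝ)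
    (P : Fin m → Prop) (Q : Fin n → Prop) (c : ℝ) :
    (∑ i, ∑ j, if P i ∧ Q j then c * |u i * v j| else 0)
      = c * ∑ i ∈ Finset.univ.filter (fun i => P i),
          ∑ j ∈ Finset.univ.filter (fun j => Q j), |u i * v j| := by
  simp only [Finset.sum_filter, Finset.mul_sum]
  refine Finset.sum_congr rfl fun i _ => ?_
  by_cases hP : P i
  · simp [hP, Finset.mul_sum, mul_ite, mul_zero]
  · simp [hP]

theorem two_ratio_points_not_critical (m n : ℕ) (hm : 1 ≤ m) (hn : 1 ≤ n)
    (u x : Fin m → ℝ) (v y : Fin n → ℝ) (μ ν : ℝ)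
    (hμpos : 0 < μ) (hμν : μ < ν)
    (hxu : ∀ i, u i = 0 → x i = 0)
    (hyv : ∀ j, v j = 0 → y j = 0)
    (hxdich : ∀ i, u i ≠ 0 → x i / u i = μ ∨ x i / u i = ν)
    (hydich : ∀ j, v j ≠ 0 → y j / v j = 1 / μ ∨ y j / v j = 1 / ν)
    (i₀ i₁ : Fin m) (j₀ j₁ : Fin n)
    (hi₀ : u i₀ ≠ 0) (hi₀' : x i₀ / u i₀ = μ)
    (hi₁ : u i₁ ≠ 0) (hi₁' : x i₁ / u i₁ = ν)
    (hj₀ : v j₀ ≠ 0) (hj₀' : y j₀ / v j₀ = 1 / ν)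
    (hj₁ : v j₁ ≠ 0) (hj₁' : y j₁ / v j₁ = 1 / μ)
    (h : Fin m → ℝ) (k : Fin n → ℝ)
    (hh : ∀ i, h i = if u i ≠ 0 ∧ x i / u i = ν then -(u i * ν) else 0)
    (hk : ∀ j, k j = if v j ≠ 0 ∧ y j / v j = 1 / ν then v j / ν else 0) :
    (∀ Λ : Matrix (Fin m) (Fin n) ℝ,
      (∀ i j, Λ i j ∈ signSet (x i * y j - u i * v j)) →
      ((∑ i, ∑ j, h i * Λ i j * y j) + (∑ i, ∑ j, x i * Λ i j * k j) =
          -(μ / ν) * (∑ i ∈ Finset.univ.filter (fun i => u i ≠ 0 ∧ x i / u i = μ),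
            ∑ j ∈ Finset.univ.filter (fun j => v j ≠ 0 ∧ y j / v j = 1 / ν), |u i * v j|)
          - (ν / μ) * (∑ i ∈ Finset.univ.filter (fun i => u i ≠ 0 ∧ x i / u i = ν),
            ∑ j ∈ Finset.univ.filter (fun j => v j ≠ 0 ∧ y j / v j = 1 / μ), |u i * v j|) ∧
        (∑ i, ∑ j, h i * Λ i j * y j) + (∑ i, ∑ j, x i * Λ i j * k j) < 0)) ∧
    ¬ (∃ Λ : Matrix (Fin m) (Fin n) ℝ,
        (∀ i j, Λ i j ∈ signSet (x i * y j - u i * v j)) ∧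
        (∀ i, ∑ j, Λ i j * y j = 0) ∧ (∀ j, ∑ i, Λ i j * x i = 0)) := by
  have hνpos : (0:ℝ) < ν := hμpos.trans hμν
  have hνne : ν ≠ 0 := ne_of_gt hνpos
  have hμne : μ ≠ 0 := ne_of_gt hμpos
  have hμν' : μ ≠ ν := ne_of_lt hμν
  have hinv : (1:ℝ)/μ ≠ 1/ν := by
    intro hEq
    apply hμν'
    field_simp at hEq
    linarith
  set A := ∑ i ∈ Finset.univ.filter (fun i => u i ≠ 0 ∧ x i / u i = μ),
      ∑ j ∈ Finset.univ.filter (fun j => v j ≠ 0 ∧ y j / v j = 1 / ν), |u i * v j| with hA_def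
  set B := ∑ i ∈ Finset.univ.filter (fun i => u i ≠ 0 ∧ x i / u i = ν),
      ∑ j ∈ Finset.univ.filter (fun j => v j ≠ 0 ∧ y j / v j = 1 / μ), |u i * v j| with hB_def
  -- A is bounded below by a positive term
  have hA1 : |u i₀ * v j₀| ≤ ∑ j ∈ Finset.univ.filter (fun j => v j ≠ 0 ∧ y j / v j = 1 / ν),
      |u i₀ * v j| :=
    Finset.single_le_sum (f := fun j => |u i₀ * v j|) (fun j _ => abs_nonneg _)
      (Finset.mem_filter.mpr ⟨Finset.mem_univ _, hj₀, hj₀'⟩)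
  have hA2 : (∑ j ∈ Finset.univ.filter (fun j => v j ≠ 0 ∧ y j / v j = 1 / ν), |u i₀ * v j|) ≤ A :=
    Finset.single_le_sum (f := fun i => ∑ j ∈ Finset.univ.filter (fun j => v j ≠ 0 ∧ y j / v j = 1 / ν), |u i * v j|) (fun i _ => Finset.sum_nonneg fun j _ => abs_nonneg _)
      (Finset.mem_filter.mpr ⟨Finset.mem_univ _, hi₀, hi₀'⟩)
  have hApos : 0 < A := by
    have : 0 < |u i₀ * v j₀| := abs_pos.mpr (mul_ne_zero hi₀ hj₀)
    linarith
  have hBnn : 0 ≤ B :=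
    Finset.sum_nonneg fun i _ => Finset.sum_nonneg fun j _ => abs_nonneg _
  have key : ∀ Λ : Matrix (Fin m) (Fin n) ℝ,
      (∀ i j, Λ i j ∈ signSet (x i * y j - u i * v j)) →
      (∑ i, ∑ j, h i * Λ i j * y j) + (∑ i, ∑ j, x i * Λ i j * k j) =
        -(μ / ν) * A - (ν / μ) * B := by
    intro Λ hΛ
    have term : ∀ i j, h i * Λ i j * y j + x i * Λ i j * k j =
        (if (u i ≠ 0 ∧ x i / u i = μ) ∧ (v j ≠ 0 ∧ y j / v j = 1/ν)
          then -(μ/ν) * |u i * v j| else 0)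
        + (if (u i ≠ 0 ∧ x i / u i = ν) ∧ (v j ≠ 0 ∧ y j / v j = 1/μ)
          then -(ν/μ) * |u i * v j| else 0) := by
      intro i j
      by_cases hu : u i = 0
      · simp [hh, hxu i hu, hu]
      by_cases hv : v j = 0
      · simp [hk, hyv j hv, hv]
      have hxval : x i = (x i / u i) * u i := (div_mul_cancel₀ _ hu).symm
      have hyval : y j = (y j / v j) * v j := (div_mul_cancel₀ _ hv).symm
      rcases hxdich i hu with hx | hx <;> rcases hydich j hv with hy | hy
      · -- ratio (μ, 1/μ): everything zero
        have h0 : h i = 0 := by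
          rw [hh, if_neg]; rintro ⟨-, h'⟩; exact hμν' (hx.symm.trans h')
        have k0 : k j = 0 := by
          rw [hk, if_neg]; rintro ⟨-, h'⟩; exact hinv (hy.symm.trans h')
        rw [h0, k0, if_neg, if_neg] <;> simp [hx, hy, hμν', hinv]
      · -- ratio (μ, 1/ν)
        have h0 : h i = 0 := by
          rw [hh, if_neg]; rintro ⟨-, h'⟩; exact hμν' (hx.symm.trans h')
        have k0 : k j = v j / ν := by rw [hk, if_pos ⟨hv, hy⟩]
        have hxe : x i = μ * u i := by rw [hxval, hx]
        have hye : y j = (1/ν) * v j := by rw [hyval, hy]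
        have hdiff : x i * y j - u i * v j = (μ/ν - 1) * (u i * v j) := by
          rw [hxe, hye]; field_simp
        have hlt : μ/ν - 1 < 0 := by
          have := (div_lt_one hνpos).mpr hμν; linarith
        have hif2 : ¬ ((u i ≠ 0 ∧ x i / u i = ν) ∧ (v j ≠ 0 ∧ y j / v j = 1/μ)) := by
          rintro ⟨-, -, h'⟩; exact hinv (h'.symm.trans hy)
        rcases lt_or_gt_of_ne (mul_ne_zero hu hv) with hw | hw
        · -- u i * v j < 0, diff > 0, Λ = 1
          have hΛ1 : Λ i j = 1 := signSet_of_pos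
            (by rw [hdiff]; exact mul_pos_of_neg_of_neg hlt hw) (hΛ i j)
          rw [if_pos (show (u i ≠ 0 ∧ x i / u i = μ) ∧ (v j ≠ 0 ∧ y j / v j = 1/ν) from ⟨⟨hu, hx⟩, ⟨hv, hy⟩⟩), if_neg hif2, h0, k0, hxe, hΛ1, abs_of_neg hw]
          field_simp
          try ring
          try tauto
        · -- u i * v j > 0, diff < 0, Λ = -1
          have hΛ1 : Λ i j = -1 := signSet_of_neg
            (by rw [hdiff]; exact mul_neg_of_neg_of_pos hlt hw) (hΛ i j)
          rw [if_pos (show (u i ≠ 0 ∧ x i / u i = μ) ∧ (v j ≠ 0 ∧ y j / v j = 1/ν) from ⟨⟨hu, hx⟩, ⟨hv, hy⟩⟩), if_neg hif2, h0, k0, hxe, hΛ1, abs_of_pos hw]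
          field_simp
          try ring
          try tauto
      · -- ratio (ν, 1/μ)
        have h0 : h i = -(u i * ν) := by rw [hh, if_pos ⟨hu, hx⟩]
        have k0 : k j = 0 := by
          rw [hk, if_neg]; rintro ⟨-, h'⟩; exact hinv (hy.symm.trans h')
        have hxe : x i = ν * u i := by rw [hxval, hx]
        have hye : y j = (1/μ) * v j := by rw [hyval, hy]
        have hdiff : x i * y j - u i * v j = (ν/μ - 1) * (u i * v j) := by
          rw [hxe, hye]; field_simp
        have hgt : 0 < ν/μ - 1 := by
          have := (one_lt_div hμpos).mpr hμν; linarith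
        have hif1 : ¬ ((u i ≠ 0 ∧ x i / u i = μ) ∧ (v j ≠ 0 ∧ y j / v j = 1/ν)) := by
          rintro ⟨⟨-, h'⟩, -⟩; exact hμν' (h'.symm.trans hx)
        rcases lt_or_gt_of_ne (mul_ne_zero hu hv) with hw | hw
        · -- u i * v j < 0, diff < 0, Λ = -1
          have hΛ1 : Λ i j = -1 := signSet_of_neg
            (by rw [hdiff]; exact mul_neg_of_pos_of_neg hgt hw) (hΛ i j)
          rw [if_neg hif1, if_pos (show (u i ≠ 0 ∧ x i / u i = ν) ∧ (v j ≠ 0 ∧ y j / v j = 1/μ) from ⟨⟨hu, hx⟩, ⟨hv, hy⟩⟩), h0, k0, hye, hΛ1, abs_of_neg hw]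
          field_simp
          try ring
          try tauto
        · -- u i * v j > 0, diff > 0, Λ = 1
          have hΛ1 : Λ i j = 1 := signSet_of_pos
            (by rw [hdiff]; exact mul_pos hgt hw) (hΛ i j)
          rw [if_neg hif1, if_pos (show (u i ≠ 0 ∧ x i / u i = ν) ∧ (v j ≠ 0 ∧ y j / v j = 1/μ) from ⟨⟨hu, hx⟩, ⟨hv, hy⟩⟩), h0, k0, hye, hΛ1, abs_of_pos hw]
          field_simp
          try ring
          try tauto
      · -- ratio (ν, 1/ν): terms cancel
        have h0 : h i = -(u i * ν) := by rw [hh, if_pos ⟨hu, hx⟩]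
        have k0 : k j = v j / ν := by rw [hk, if_pos ⟨hv, hy⟩]
        have hxe : x i = ν * u i := by rw [hxval, hx]
        have hye : y j = (1/ν) * v j := by rw [hyval, hy]
        have hif1 : ¬ ((u i ≠ 0 ∧ x i / u i = μ) ∧ (v j ≠ 0 ∧ y j / v j = 1/ν)) := by
          rintro ⟨⟨-, h'⟩, -⟩; exact hμν' (h'.symm.trans hx)
        have hif2 : ¬ ((u i ≠ 0 ∧ x i / u i = ν) ∧ (v j ≠ 0 ∧ y j / v j = 1/μ)) := by
          rintro ⟨-, -, h'⟩; exact hinv (h'.symm.trans hy)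
        rw [if_neg hif1, if_neg hif2, h0, k0, hxe, hye]
        field_simp
        try ring
        try tauto
    calc (∑ i, ∑ j, h i * Λ i j * y j) + (∑ i, ∑ j, x i * Λ i j * k j)
        = ∑ i, ∑ j, (h i * Λ i j * y j + x i * Λ i j * k j) := by
          rw [← Finset.sum_add_distrib]
          exact Finset.sum_congr rfl fun i _ => (Finset.sum_add_distrib).symm
      _ = ∑ i, ∑ j, ((if (u i ≠ 0 ∧ x i / u i = μ) ∧ (v j ≠ 0 ∧ y j / v j = 1/ν)
              then -(μ/ν) * |u i * v j| else 0)
            + (if (u i ≠ 0 ∧ x i / u i = ν) ∧ (v j ≠ 0 ∧ y j / v j = 1/μ)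
              then -(ν/μ) * |u i * v j| else 0)) :=
          Finset.sum_congr rfl fun i _ => Finset.sum_congr rfl fun j _ => term i j
      _ = (∑ i, ∑ j, (if (u i ≠ 0 ∧ x i / u i = μ) ∧ (v j ≠ 0 ∧ y j / v j = 1/ν)
              then -(μ/ν) * |u i * v j| else 0))
          + (∑ i, ∑ j, (if (u i ≠ 0 ∧ x i / u i = ν) ∧ (v j ≠ 0 ∧ y j / v j = 1/μ)
              then -(ν/μ) * |u i * v j| else 0)) := by
          simp only [Finset.sum_add_distrib]
      _ = -(μ/ν) * A - (ν/μ) * B := by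
          have e1 : (∑ i, ∑ j, (if (u i ≠ 0 ∧ x i / u i = μ) ∧ (v j ≠ 0 ∧ y j / v j = 1/ν)
                then -(μ/ν) * |u i * v j| else 0)) = -(μ/ν) * A := by
            rw [hA_def]
            simp only [Finset.sum_filter, Finset.mul_sum]
            refine Finset.sum_congr rfl fun i _ => ?_
            by_cases hP : u i ≠ 0 ∧ x i / u i = μ
            · simp [hP, Finset.mul_sum, mul_ite, mul_zero]
            · simp [hP]
          have e2 : (∑ i, ∑ j, (if (u i ≠ 0 ∧ x i / u i = ν) ∧ (v j ≠ 0 ∧ y j / v j = 1/μ)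
                then -(ν/μ) * |u i * v j| else 0)) = -(ν/μ) * B := by
            rw [hB_def]
            simp only [Finset.sum_filter, Finset.mul_sum]
            refine Finset.sum_congr rfl fun i _ => ?_
            by_cases hP : u i ≠ 0 ∧ x i / u i = ν
            · simp [hP, Finset.mul_sum, mul_ite, mul_zero]
            · simp [hP]
          rw [e1, e2]
          ring
  have hneg : -(μ/ν) * A - (ν/μ) * B < 0 := by
    have h1 : 0 < μ/ν := div_pos hμpos hνpos
    have h2 : 0 < ν/μ := div_pos hνpos hμpos
    nlinarith
  constructor
  · intro Λ hΛ
    exact ⟨key Λ hΛ, by rw [key Λ hΛ]; exact hneg⟩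
  · rintro ⟨Λ, hΛ, hrow, hcol⟩
    have hzero : (∑ i, ∑ j, h i * Λ i j * y j) + (∑ i, ∑ j, x i * Λ i j * k j) = 0 := by
      have e1 : (∑ i, ∑ j, h i * Λ i j * y j) = 0 := by
        refine Finset.sum_eq_zero fun i _ => ?_
        have : (∑ j, h i * Λ i j * y j) = h i * ∑ j, Λ i j * y j := by
          rw [Finset.mul_sum]; exact Finset.sum_congr rfl fun j _ => by ring
        rw [this, hrow i, mul_zero]
      have e2 : (∑ i, ∑ j, x i * Λ i j * k j) = 0 := by
        rw [Finset.sum_comm]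
        refine Finset.sum_eq_zero fun j _ => ?_
        have : (∑ i, x i * Λ i j * k j) = (∑ i, Λ i j * x i) * k j := by
          rw [Finset.sum_mul]; exact Finset.sum_congr rfl fun i _ => by ring
        rw [this, hcol j, zero_mul]
      rw [e1, e2, add_zero]
    rw [key Λ hΛ] at hzero
    exact absurd hzero (ne_of_lt hneg)
end

section
/- Let x = (1, −1) ∈ ℝ², y = (1, 1) ∈ ℝ², and M = [[2, 1], [−1, −1/2]] ∈ ℝ^{2×2}. Then: (i) there is no matrix Λ ∈ ℝ^{2×2} with Λ_{ij} ∈ sign(x_i y_j − M_{ij}) for all i,j such that Λy = 0 and Λᵀx = 0; yet (ii) for each i ∈ {1,2} there exist λ₁, λ₂ with λ_j ∈ sign(x_i y_j − M_{ij}) and λ₁ y₁ + λ₂ y₂ = 0, and for each j ∈ {1,2} there exist λ₁, λ₂ with λ_i ∈ sign(x_i y_j − M_{ij}) and λ₁ x₁ + λ₂ x₂ = 0. That is, 0 belongs to each partial Clarke subdifferential of f(x,y) = Σ_{i,j}|x_i y_j − M_{ij}| at (x,y) but 0 does not belong to the Clarke subdifferential, so the inclusion of the Clarke subdifferential into the product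 of partial subdifferentials is strict. -/
open scoped Classical

lemma signSet_neg {t : ℝ} (h : t < 0) : signSet t = {-1} := by simp [signSet, h]

lemma signSet_zero : signSet 0 = Set.Icc (-1) 1 := by simp [signSet]

/-- For `x = (1,−1)`, `y = (1,1)` and `M = [[2,1],[−1,−1/2]]`, zero belongs
to each partial Clarke subdifferential of `f(x,y) = Σᵢⱼ |xᵢyⱼ − Mᵢⱼ|` at `(x,y)` but not
to the Clarke subdifferential: no matrix `Λ` with `Λᵢⱼ ∈ sign(xᵢyⱼ − Mᵢⱼ)` satisfies
`Λy = 0` and `Λᵀx = 0`, yet the corresponding one-dimensional conditions hold for each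
row and each column. -/
theorem partial_subdifferentials_strict_inclusion :
    let x : Fin 2 → ℝ := ![1, -1]
    let y : Fin 2 → ℝ := ![1, 1]
    let M : Matrix (Fin 2) (Fin 2) ℝ := !![2, 1; -1, -1/2]
    (¬ ∃ Λ : Matrix (Fin 2) (Fin 2) ℝ,
        (∀ i j, Λ i j ∈ signSet (x i * y j - M i j)) ∧
        (∀ i, ∑ j, Λ i j * y j = 0) ∧ (∀ j, ∑ i, Λ i j * x i = 0)) ∧
    (∀ i : Fin 2, ∃ lam : Fin 2 → ℝ,
        (∀ j, lam j ∈ signSet (x i * y j - M i j)) ∧ (∑ j, lam j * y j = 0)) ∧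
    (∀ j : Fin 2, ∃ lam : Fin 2 → ℝ,
        (∀ i, lam i ∈ signSet (x i * y j - M i j)) ∧ (∑ i, lam i * x i = 0)) := by
  intro x y M
  refine ⟨?_, ?_, ?_⟩
  · rintro ⟨Λ, hmem, hrow, hcol⟩
    have h00 : Λ 0 0 = -1 := by
      have := hmem 0 0
      rw [show x 0 * y 0 - M 0 0 = -1 by simp [x, y, M]; norm_num,
        signSet_neg (by norm_num)] at this
      simpa using this
    have h11 : Λ 1 1 = -1 := by
      have := hmem 1 1
      rw [show x 1 * y 1 - M 1 1 = -1/2 by simp [x, y, M]; norm_num,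
        signSet_neg (by norm_num)] at this
      simpa using this
    have hr1 : Λ 1 0 = 1 := by
      have := hrow 1
      rw [Fin.sum_univ_two] at this
      simp [y, h11] at this
      linarith
    have hc0 : Λ 1 0 = -1 := by
      have := hcol 0
      rw [Fin.sum_univ_two] at this
      simp [x, h00] at this
      linarith
    rw [hr1] at hc0; norm_num at hc0
  · intro i
    fin_cases i
    · exact ⟨![-1, 1], by intro j; fin_cases j <;> simp [x, y, M, signSet] <;> norm_num,
        by rw [Fin.sum_univ_two]; simp [y]⟩
    · exact ⟨![1, -1], by intro j; fin_cases j <;> simp [x, y, M, signSet] <;> norm_num,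
        by rw [Fin.sum_univ_two]; simp [y]⟩
  · intro j
    fin_cases j
    · exact ⟨![-1, -1], by intro i; fin_cases i <;> simp [x, y, M, signSet] <;> norm_num,
        by rw [Fin.sum_univ_two]; simp [x]⟩
    · exact ⟨![-1, -1], by intro i; fin_cases i <;> simp [x, y, M, signSet] <;> norm_num,
        by rw [Fin.sum_univ_two]; simp [x]⟩
end
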